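/- arXiv:2506.16140 — 5 statements merged into one kernel-verified Lean document; each statement's English description precedes it below -/
import Mathlib

section
/- Let k ≥ 2, ℓ ≥ 1, r ≥ 2 be integers and n ≡ k-1 (mod ℓ), with n ≥ k-1+ℓ. Let H* be the r-uniform hypergraph on n vertices obtained by taking a set A* of k-1 vertices, partitioning the remaining n-k+1 vertices into classes of size ℓ, and taking all r-subsets of A* ∪ X for each class X. Then H* contains no Berge copy of T_ℓ ∪ (k-1)S_ℓ for any tree T_ℓ with ℓ edges; that is, one cannot find k pairwise vertex-disjoint skeletons (one a tree with ℓ edges, the others stars with ℓ edges) realized by distinct hyperedges of H*. -/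
open Finset

/-- A Berge copy of the graph `F` in the hypergraph `H`: an injective embedding of the
vertices of `F` together with an injective assignment of distinct hyperedges to the
edges of `F`, each hyperedge containing (the images of) both endpoints of its edge. -/
def IsBergeCopy {α V : Type*} (F : SimpleGraph α) (H : Finset (Finset V)) : Prop :=
  ∃ (f : α → V) (φ : Sym2 α → Finset V),
    Function.Injective f ∧ Set.InjOn φ F.edgeSet ∧
    ∀ e ∈ F.edgeSet, φ e ∈ H ∧ ∀ x ∈ e, f x ∈ φ e

/-- The Turán number `ex_r(n, Berge-F)`: the maximum number of hyperedges in an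
`n`-vertex `r`-uniform hypergraph with no Berge copy of `F`. -/
noncomputable def exBerge {α : Type*} (r n : ℕ) (F : SimpleGraph α) : ℕ :=
  sSup {m | ∃ H : Finset (Finset (Fin n)),
    (∀ e ∈ H, e.card = r) ∧ ¬ IsBergeCopy F H ∧ H.card = m}

/-- The path with `ℓ` edges, on `ℓ+1` vertices. -/
def pathG (ℓ : ℕ) : SimpleGraph (Fin (ℓ + 1)) :=
  SimpleGraph.fromRel (fun x y => (x : ℕ) + 1 = (y : ℕ))

/-- `c` vertex-disjoint stars, each with `ℓ` edges (centers are the vertices `(i, 0)`). -/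
def starsG (c ℓ : ℕ) : SimpleGraph (Fin c × Fin (ℓ + 1)) :=
  SimpleGraph.fromRel (fun x y => x.1 = y.1 ∧ x.2 = 0)

/-- A matching with `t` edges. -/
def matchingG (t : ℕ) : SimpleGraph (Fin t × Fin 2) :=
  SimpleGraph.fromRel (fun x y => x.1 = y.1)

/-- Vertex-disjoint union of `k` paths, the `i`-th having `ℓ i` edges. -/
def pathsG (k : ℕ) (ℓ : Fin k → ℕ) : SimpleGraph (Σ i : Fin k, Fin (ℓ i + 1)) :=
  SimpleGraph.fromRel (fun x y => x.1 = y.1 ∧ (x.2 : ℕ) + 1 = (y.2 : ℕ))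

/-- A hypergraph is connected if every two vertices are joined by a walk of hyperedges
(equivalently, lie on a common Berge path). -/
def HyperConnected {V : Type*} (H : Finset (Finset V)) : Prop :=
  ∀ u v : V, Relation.ReflTransGen (fun a b => ∃ e ∈ H, a ∈ e ∧ b ∈ e) u v

/-- The connected Turán number `ex^con_r(n, Berge-F)`. -/
noncomputable def exConBerge {α : Type*} (r n : ℕ) (F : SimpleGraph α) : ℕ :=
  sSup {m | ∃ H : Finset (Finset (Fin n)),
    (∀ e ∈ H, e.card = r) ∧ HyperConnected H ∧ ¬ IsBergeCopy F H ∧ H.card = m}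

/-!
Every hyperedge of `H*` lies inside a block `A* ∪ X`, so consecutive vertices of a skeleton
always share a block. A connected skeleton avoiding `A*` is therefore trapped in a single
class `X`, which has only `ℓ` vertices; hence each of the `k` components of a Berge copy of
`T_ℓ ∪ (k-1)S_ℓ`, having `ℓ + 1` vertices, meets `A*`. Since the embedding is injective,
this needs `k` distinct vertices in `A*`, which has only `k - 1`.
-/

open Function

namespace SimpleGraph

variable {β V ι : Type*} {G : SimpleGraph β} {f : β → V} {X : ι → Finset V}

theorem Reachable.apply_mem_of_forall_adj (hX : Pairwise (Disjoint on X))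
    (hadj : ∀ ⦃u v⦄, G.Adj u v → ∃ i, f u ∈ X i ∧ f v ∈ X i)
    {u v : β} (huv : G.Reachable u v) {i : ι} (hu : f u ∈ X i) : f v ∈ X i := by
  have hrel := (reachable_iff_reflTransGen u v).1 huv
  clear huv
  induction hrel with
  | refl => exact hu
  | tail _ hab ih =>
    obtain ⟨j, hj, hb⟩ := hadj hab
    obtain rfl : j = i := by
      by_contra hji
      exact Finset.disjoint_left.1 (hX hji) hj ih
    exact hb

theorem Connected.exists_apply_mem_of_forall_adj [Fintype β] [Nontrivial β] [DecidableEq V]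
    (hG : G.Connected) (hf : Injective f) {A : Finset V}
    (hX : Pairwise (Disjoint on X)) (hcard : ∀ i, #(X i) < Fintype.card β)
    (hadj : ∀ ⦃u v⦄, G.Adj u v → ∃ i, f u ∈ A ∪ X i ∧ f v ∈ A ∪ X i) :
    ∃ v, f v ∈ A := by
  by_contra! hA
  have hadjX : ∀ ⦃u v⦄, G.Adj u v → ∃ i, f u ∈ X i ∧ f v ∈ X i := fun u v huv ↦ by
    obtain ⟨i, hu, hv⟩ := hadj huv
    exact ⟨i, (mem_union.1 hu).resolve_left (hA u), (mem_union.1 hv).resolve_left (hA v)⟩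
  obtain ⟨v₀⟩ : Nonempty β := inferInstance
  obtain ⟨w₀, hw₀⟩ := hG.preconnected.exists_adj_of_nontrivial v₀
  obtain ⟨i, hv₀, -⟩ := hadjX hw₀
  have hall : ∀ v, f v ∈ X i := fun v ↦
    (hG.preconnected v₀ v).apply_mem_of_forall_adj hX hadjX hv₀
  have := card_le_card_of_injOn f (s := univ) (fun v _ ↦ hall v) hf.injOn
  exact (hcard i).not_ge (by simpa using this)

end SimpleGraph

open SimpleGraph

theorem starsG_comap_mk (c ℓ : ℕ) (j : Fin c) :
    (starsG c ℓ).comap (Prod.mk j) = starGraph 0 := by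
  ext x y
  simp [starsG]

theorem exists_mem_union_of_adj_of_berge {α V ι : Type*} {F : SimpleGraph α}
    {H : Finset (Finset V)} {A : Finset V} {X : ι → Finset V} [DecidableEq V]
    (hH : ∀ e ∈ H, ∃ i, e ⊆ A ∪ X i) {f : α → V} {φ : Sym2 α → Finset V}
    (hφ : ∀ e ∈ F.edgeSet, φ e ∈ H ∧ ∀ x ∈ e, f x ∈ φ e) :
    ∀ ⦃u v⦄, F.Adj u v → ∃ i, f u ∈ A ∪ X i ∧ f v ∈ A ∪ X i := by
  intro u v huv
  obtain ⟨he, hmem⟩ := hφ s(u, v) huv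
  obtain ⟨i, hi⟩ := hH _ he
  exact ⟨i, hi (hmem u (Sym2.mem_mk_left u v)), hi (hmem v (Sym2.mem_mk_right u v))⟩

theorem Hstar_bergeFree_general (k ℓ r m n : ℕ) (hl : 1 ≤ ℓ)
    (A : Finset (Fin n)) (hA : A.card = k - 1)
    (X : Fin m → Finset (Fin n)) (hX : ∀ i, (X i).card = ℓ)
    (hXX : ∀ i j, i ≠ j → Disjoint (X i) (X j))
    (Hstar : Finset (Finset (Fin n)))
    (hHstar : ∀ e, e ∈ Hstar ↔ e.card = r ∧ ∃ i, e ⊆ A ∪ X i) :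
    ∀ T : SimpleGraph (Fin (ℓ + 1)), T.IsTree →
      ¬ IsBergeCopy (T.sum (starsG (k - 1) ℓ)) Hstar := by
  rintro T hT ⟨f, φ, hf, -, hφ⟩
  have hblock := exists_mem_union_of_adj_of_berge (fun e he ↦ ((hHstar e).1 he).2) hφ
  have : Nontrivial (Fin (ℓ + 1)) := Fin.nontrivial_iff_two_le.2 (by omega)
  have hcard : ∀ i, #(X i) < Fintype.card (Fin (ℓ + 1)) := by simp [hX]
  obtain ⟨t, ht : f (.inl t) ∈ A⟩ := hT.connected.exists_apply_mem_of_forall_adj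
    (hf.comp Sum.inl_injective) hXX hcard fun _ _ huv ↦ hblock (sum_adj_inl.2 huv)
  have hstars : ∀ j, ∃ b, f (.inr (j, b)) ∈ A := fun j ↦
    (connected_starGraph 0).exists_apply_mem_of_forall_adj
      (hf.comp (Sum.inr_injective.comp (Prod.mk_right_injective j))) hXX hcard fun _ _ huv ↦
        hblock (sum_adj_inr.2 (by rwa [← starsG_comap_mk] at huv))
  choose s hs using hstars
  let g : Option (Fin (k - 1)) → Fin n := fun o ↦ o.elim (f (.inl t)) fun j ↦ f (.inr (j, s j))
  have hg : Injective g := by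
    rintro (_ | i) (_ | j) h <;> simp_all [g, hf.eq_iff]
  have := card_le_card_of_injOn g (s := univ) (t := A) (by rintro (_ | j) _ <;> simp [g, ht, hs])
    hg.injOn
  simp [hA] at this

theorem Hstar_bergeFree (k ℓ r m n : ℕ) (hk : 2 ≤ k) (hl : 1 ≤ ℓ) (hr : 2 ≤ r)
    (hm : 1 ≤ m) (hn : n = k - 1 + ℓ * m)
    (A : Finset (Fin n)) (hA : A.card = k - 1)
    (X : Fin m → Finset (Fin n)) (hX : ∀ i, (X i).card = ℓ)
    (hXA : ∀ i, Disjoint A (X i))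
    (hXX : ∀ i j, i ≠ j → Disjoint (X i) (X j))
    (Hstar : Finset (Finset (Fin n)))
    (hHstar : ∀ e, e ∈ Hstar ↔ e.card = r ∧ ∃ i, e ⊆ A ∪ X i) :
    ∀ T : SimpleGraph (Fin (ℓ + 1)), T.IsTree →
      ¬ IsBergeCopy (T.sum (starsG (k - 1) ℓ)) Hstar :=
  Hstar_bergeFree_general k ℓ r m n hl A hA X hX hXX Hstar hHstar
end

section
/- Let k ≥ 2, 2 ≤ r ≤ k, and 1 ≤ t ≤ k be integers. For sufficiently large n, the maximum number of hyperedges in an n-vertex r-uniform hypergraph containing no Berge copy of M_t ∪ (k-t)S_2 equals C(k-1, r-1)(n-k+1) + C(k-1, r). -/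
open Finset

/-!
Call a vertex a host if its degree is at least a constant `D(k)`. Berge copies of the `k`
components (edges and cherries) can be found greedily, one at a time, as long as each
component has a robust source, one that survives forbidding the `O(k)` vertices and hyperedges
already used: a host is such a source, and so is any large supply of gadgets among the low
vertices, as these have bounded degree. Hence a Berge-`F`-free `H` has a set `S` of at most
`k - 1` hosts. The hyperedges with at most one vertex outside `S` number at most
`C(|S|, r) + C(|S|, r - 1) (n - |S|)`, which is the claimed bound when `|S| = k - 1`, and then
there are no others, since a hyperedge with two low vertices would supply the `k`-th component.
When `|S| ≤ k - 2` the coefficient of `n` drops by at least `q = max 1 C(|S|, r - 2)`, so it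
suffices that at most `q n / 2 + O(1)` hyperedges have two low vertices. If there are more,
they are a robust source of edges, so the low vertices centring a cherry with low leaves (a
robust source of cherries when numerous) are few; at any other low vertex all these hyperedges
share one pair of low vertices, so at most `q` of them pass through it, and double counting
concludes.

For the lower bound, take all `r`-sets with at most one vertex outside a fixed `(k - 1)`-set
`K`: every edge of a Berge copy has an endpoint in `K`, and the `k` components need distinct
ones.
-/

section BergeEmbeddings

variable {α β ι V : Type*}

structure BergeEmbedding (F : SimpleGraph α) (H : Finset (Finset V)) where
  toFun : α → V
  edgeMap : Sym2 α → Finset V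
  injective : Function.Injective toFun
  injOn : Set.InjOn edgeMap F.edgeSet
  edgeMap_mem : ∀ e ∈ F.edgeSet, edgeMap e ∈ H
  mem_edgeMap : ∀ e ∈ F.edgeSet, ∀ x ∈ e, toFun x ∈ edgeMap e

namespace BergeEmbedding

variable {F : SimpleGraph α} {H : Finset (Finset V)}

def verts (g : BergeEmbedding F H) : Set V := Set.range g.toFun

def hedges (g : BergeEmbedding F H) : Set (Finset V) := g.edgeMap '' F.edgeSet

def Avoids (g : BergeEmbedding F H) (D : Set V) (U : Set (Finset V)) : Prop :=
  (∀ a, g.toFun a ∉ D) ∧ ∀ e ∈ F.edgeSet, g.edgeMap e ∉ U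

variable {g : BergeEmbedding F H}

theorem Avoids.mono {D D' : Set V} {U U' : Set (Finset V)} (h : g.Avoids D U) (hD : D' ⊆ D)
    (hU : U' ⊆ U) : g.Avoids D' U' :=
  ⟨fun a ha => h.1 a (hD ha), fun e he he' => h.2 e he (hU he')⟩

theorem Avoids.symm {F' : SimpleGraph β} {g' : BergeEmbedding F' H}
    (h : g.Avoids g'.verts g'.hedges) : g'.Avoids g.verts g.hedges :=
  ⟨fun a ⟨b, hb⟩ => h.1 b (hb ▸ ⟨a, rfl⟩),
    fun e he ⟨e', he', hee'⟩ => h.2 e' he' (hee' ▸ ⟨e, he, rfl⟩)⟩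

theorem avoids_iUnion {D : ι → Set V} {U : ι → Set (Finset V)} :
    g.Avoids (⋃ i, D i) (⋃ i, U i) ↔ ∀ i, g.Avoids (D i) (U i) := by
  simp only [Avoids, Set.mem_iUnion, not_exists]
  exact ⟨fun h i => ⟨fun a => h.1 a i, fun e he => h.2 e he i⟩,
    fun h => ⟨fun a i => (h i).1 a, fun e he i => (h i).2 e he⟩⟩

theorem isBergeCopy_sum {F₁ : SimpleGraph α} {F₂ : SimpleGraph β} (g₁ : BergeEmbedding F₁ H)
    (g₂ : BergeEmbedding F₂ H) (h : g₁.Avoids g₂.verts g₂.hedges) :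
    IsBergeCopy (F₁.sum F₂) H := by
  let φ : Sym2 (α ⊕ β) → Finset V := Sym2.lift ⟨fun x y => match x, y with
    | .inl a, .inl b => g₁.edgeMap s(a, b)
    | .inr a, .inr b => g₂.edgeMap s(a, b)
    | _, _ => ∅, by rintro (a | a) (b | b) <;> simp [Sym2.eq_swap]⟩
  have hedge : ∀ e ∈ (F₁.sum F₂).edgeSet,
      (∃ e₁ ∈ F₁.edgeSet, e = e₁.map .inl ∧ φ e = g₁.edgeMap e₁) ∨
      (∃ e₂ ∈ F₂.edgeSet, e = e₂.map .inr ∧ φ e = g₂.edgeMap e₂) := by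
    rintro ⟨x | x, y | y⟩ he <;> simp at he
    · exact .inl ⟨s(x, y), he, rfl, rfl⟩
    · exact .inr ⟨s(x, y), he, rfl, rfl⟩
  refine ⟨Sum.elim g₁.toFun g₂.toFun, φ, ?_, ?_, fun e he => ?_⟩
  · rintro (a | a) (b | b) hab
    · exact congrArg _ (g₁.injective hab)
    · exact absurd hab (fun hab => h.1 a ⟨b, hab.symm⟩)
    · exact absurd hab (fun hab => h.1 b ⟨a, hab⟩)
    · exact congrArg _ (g₂.injective hab)
  · intro e he e' he' hee'
    rcases hedge e he with ⟨e₁, he₁, rfl, hφ⟩ | ⟨e₂, he₂, rfl, hφ⟩ <;>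
      rcases hedge e' he' with ⟨e₁', he₁', rfl, hφ'⟩ | ⟨e₂', he₂', rfl, hφ'⟩ <;>
      rw [hφ, hφ'] at hee'
    · rw [g₁.injOn he₁ he₁' hee']
    · exact absurd hee' fun hee' => h.2 e₁ he₁ ⟨e₂', he₂', hee'.symm⟩
    · exact absurd hee' fun hee' => h.2 e₁' he₁' ⟨e₂, he₂, hee'⟩
    · rw [g₂.injOn he₂ he₂' hee']
  · rcases hedge e he with ⟨e₁, he₁, rfl, hφ⟩ | ⟨e₂, he₂, rfl, hφ⟩ <;> rw [hφ]
    · refine ⟨g₁.edgeMap_mem e₁ he₁, fun x hx => ?_⟩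
      obtain ⟨a, ha, rfl⟩ := Sym2.mem_map.mp hx
      exact g₁.mem_edgeMap e₁ he₁ a ha
    · refine ⟨g₂.edgeMap_mem e₂ he₂, fun x hx => ?_⟩
      obtain ⟨a, ha, rfl⟩ := Sym2.mem_map.mp hx
      exact g₂.mem_edgeMap e₂ he₂ a ha

section Glue

variable [DecidableEq ι] {G : SimpleGraph (ι × β)} {G₀ : SimpleGraph β}

def glue (hG : ∀ ⦃i j a b⦄, G.Adj (i, a) (j, b) → i = j ∧ G₀.Adj a b)
    (g : ι → BergeEmbedding G₀ H)
    (hg : Pairwise fun i j => (g i).Avoids (g j).verts (g j).hedges) : BergeEmbedding G H := by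
  let φ : Sym2 (ι × β) → Finset V := Sym2.lift ⟨fun x y =>
    if x.1 = y.1 then (g x.1).edgeMap s(x.2, y.2) else ∅, by
      rintro ⟨i, a⟩ ⟨j, b⟩
      by_cases hij : i = j
      · subst hij; simp [Sym2.eq_swap]
      · simp [hij, Ne.symm hij]⟩
  have hedge : ∀ e ∈ G.edgeSet, ∃ i, ∃ e₀ ∈ G₀.edgeSet, e = e₀.map (Prod.mk i) ∧
      φ e = (g i).edgeMap e₀ := by
    rintro ⟨⟨i, a⟩, ⟨j, b⟩⟩ he
    obtain ⟨rfl, hab⟩ := hG he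
    exact ⟨i, s(a, b), hab, rfl, by simp [φ]⟩
  refine ⟨fun x => (g x.1).toFun x.2, φ, ?_, ?_, fun e he => ?_, fun e he => ?_⟩
  · rintro ⟨i, a⟩ ⟨j, b⟩ hab
    by_cases hij : i = j
    · subst hij; exact congrArg _ ((g i).injective hab)
    · exact absurd hab fun hab => (hg hij).1 a ⟨b, hab.symm⟩
  · intro e he e' he' hee'
    obtain ⟨i, e₀, he₀, rfl, hφ⟩ := hedge e he
    obtain ⟨j, e₀', he₀', rfl, hφ'⟩ := hedge e' he'
    rw [hφ, hφ'] at hee'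
    by_cases hij : i = j
    · subst hij; rw [(g i).injOn he₀ he₀' hee']
    · exact absurd hee' fun hee' => (hg hij).2 e₀ he₀ ⟨e₀', he₀', hee'.symm⟩
  · obtain ⟨i, e₀, he₀, -, hφ⟩ := hedge e he
    exact hφ ▸ (g i).edgeMap_mem e₀ he₀
  · obtain ⟨i, e₀, he₀, rfl, hφ⟩ := hedge e he
    intro x hx
    obtain ⟨a, ha, rfl⟩ := Sym2.mem_map.mp hx
    exact hφ ▸ (g i).mem_edgeMap e₀ he₀ a ha

variable {hG : ∀ ⦃i j a b⦄, G.Adj (i, a) (j, b) → i = j ∧ G₀.Adj a b}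
  {g : ι → BergeEmbedding G₀ H}
  {hg : Pairwise fun i j => (g i).Avoids (g j).verts (g j).hedges}

theorem verts_glue : (glue hG g hg).verts = ⋃ i, (g i).verts := by
  ext v; simp [verts, glue]

theorem hedges_glue_subset : (glue hG g hg).hedges ⊆ ⋃ i, (g i).hedges := by
  rintro _ ⟨⟨⟨i, a⟩, ⟨j, b⟩⟩, he, rfl⟩
  obtain ⟨rfl, hab⟩ := hG he
  exact Set.mem_iUnion.mpr ⟨i, s(a, b), hab, by simp [glue]⟩

theorem avoids_glue {D : Set V} {U : Set (Finset V)} (h : ∀ i, (g i).Avoids D U) :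
    (glue hG g hg).Avoids D U := by
  refine ⟨fun x => (h x.1).1 x.2, ?_⟩
  rintro ⟨⟨i, a⟩, ⟨j, b⟩⟩ he
  obtain ⟨rfl, hab⟩ := hG he
  simpa [glue] using (h i).2 s(a, b) hab

end Glue

end BergeEmbedding

end BergeEmbeddings

local notation "K₂" => (⊤ : SimpleGraph (Fin 2))

/-- `S₂` with centre `0`, the component of `starsG u 2`. -/
def cherryGraph : SimpleGraph (Fin 3) := SimpleGraph.fromRel fun a _ => a = 0

instance : DecidableRel cherryGraph.Adj :=
  inferInstanceAs (DecidableRel (SimpleGraph.fromRel _).Adj)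

theorem mk_zero_mem_edgeSet_cherryGraph {c : Fin 3} (hc : c ≠ 0) :
    s(0, c) ∈ cherryGraph.edgeSet := by
  have : ∀ c : Fin 3, c ≠ 0 → s(0, c) ∈ cherryGraph.edgeSet := by decide
  exact this c hc

theorem zero_mem_of_mem_edgeSet_cherryGraph {e : Sym2 (Fin 3)} (he : e ∈ cherryGraph.edgeSet) :
    0 ∈ e := by
  have : ∀ e ∈ cherryGraph.edgeSet, 0 ∈ e := by decide
  exact this e he

section Gadgets

variable {V : Type*} {H : Finset (Finset V)}

def pairEmbedding {x y : V} {e : Finset V} (hxy : x ≠ y) (hx : x ∈ e) (hy : y ∈ e)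
    (he : e ∈ H) : BergeEmbedding K₂ H where
  toFun := ![x, y]
  edgeMap _ := e
  injective := by
    intro a b; fin_cases a <;> fin_cases b <;> simp [hxy, Ne.symm hxy]
  injOn := by
    have : ∀ e₁ ∈ (K₂).edgeSet, ∀ e₂ ∈ (K₂).edgeSet, e₁ = e₂ := by decide
    exact fun e₁ he₁ e₂ he₂ _ => this e₁ he₁ e₂ he₂
  edgeMap_mem _ _ := he
  mem_edgeMap _ _ a _ := by fin_cases a <;> simpa

def cherryEmbedding {v x z : V} {e f : Finset V} (hvx : v ≠ x) (hvz : v ≠ z) (hxz : x ≠ z)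
    (hve : v ∈ e) (hxe : x ∈ e) (hvf : v ∈ f) (hzf : z ∈ f) (he : e ∈ H) (hf : f ∈ H)
    (hef : e ≠ f) : BergeEmbedding cherryGraph H where
  toFun := ![v, x, z]
  edgeMap s := if 2 ∈ s then f else e
  injective := by
    intro a b
    fin_cases a <;> fin_cases b <;> simp [hvx, hvz, hxz, Ne.symm hvx, Ne.symm hvz, Ne.symm hxz]
  injOn := by
    have : ∀ e₁ ∈ cherryGraph.edgeSet, ∀ e₂ ∈ cherryGraph.edgeSet,
        (2 ∈ e₁ ↔ 2 ∈ e₂) → e₁ = e₂ := by decide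
    intro e₁ he₁ e₂ he₂ h
    refine this e₁ he₁ e₂ he₂ ?_
    by_cases h₁ : 2 ∈ e₁ <;> by_cases h₂ : 2 ∈ e₂ <;> simp_all [Ne.symm hef]
  edgeMap_mem s _ := by split_ifs <;> assumption
  mem_edgeMap := by
    rintro ⟨a, b⟩ hab c hc
    simp only [cherryGraph, SimpleGraph.mem_edgeSet, SimpleGraph.fromRel_adj] at hab
    fin_cases a <;> fin_cases b <;> simp at hab <;> simp at hc <;>
      rcases hc with rfl | rfl <;> simpa

end Gadgets

section Greedy

open BergeEmbedding Function

variable {β V : Type*} {G : SimpleGraph β} {H : Finset (Finset V)}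

/-- Any `a` vertices and `b` hyperedges can be avoided by some Berge copy of `G`, as long as
they spare the vertices `R` and hyperedges `Q` that the copies may need (such as a centre). -/
def RobustlyEmbeds (G : SimpleGraph β) (H : Finset (Finset V)) (R : Finset V)
    (Q : Finset (Finset V)) (a b : ℕ) : Prop :=
  ∀ D U : Finset _, Disjoint D R → Disjoint U Q → #D ≤ a → #U ≤ b →
    ∃ g : BergeEmbedding G H, g.Avoids D U

variable [DecidableEq V]

theorem BergeEmbedding.avoids_iff_disjoint [Fintype β] [Fintype G.edgeSet]
    (g : BergeEmbedding G H) {D : Finset V} {U : Finset (Finset V)} :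
    g.Avoids D U ↔ Disjoint (univ.image g.toFun) D ∧ Disjoint (G.edgeFinset.image g.edgeMap) U := by
  simp [Avoids, disjoint_left]

theorem BergeEmbedding.coe_image_toFun [Fintype β] (g : BergeEmbedding G H) :
    ((univ.image g.toFun : Finset V) : Set V) = g.verts := by
  simp [verts]

theorem BergeEmbedding.coe_image_edgeMap [Fintype G.edgeSet] (g : BergeEmbedding G H) :
    ((G.edgeFinset.image g.edgeMap : Finset (Finset V)) : Set (Finset V)) = g.hedges := by
  simp [hedges]

theorem RobustlyEmbeds.exists_avoids_and_forall_avoids [Fintype β] [Fintype G.edgeSet]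
    {R : Finset V} {Q : Finset (Finset V)} {a b c : ℕ} (hsrc : RobustlyEmbeds G H R Q a b)
    (g : Fin c → BergeEmbedding G H) (hgR : ∀ i, (g i).Avoids R Q) {D₀ : Finset V}
    {U₀ : Finset (Finset V)} (hD₀ : Disjoint D₀ R) (hU₀ : Disjoint U₀ Q)
    (ha : #D₀ + c * Fintype.card β ≤ a) (hb : #U₀ + c * #G.edgeFinset ≤ b) :
    ∃ g' : BergeEmbedding G H, g'.Avoids D₀ U₀ ∧ ∀ i, g'.Avoids (g i).verts (g i).hedges := by
  set D := D₀ ∪ univ.biUnion fun i => univ.image (g i).toFun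
  set U := U₀ ∪ univ.biUnion fun i => G.edgeFinset.image (g i).edgeMap
  have hDR : Disjoint D R := disjoint_union_left.mpr
    ⟨hD₀, (disjoint_biUnion_left _ _ _).mpr fun i _ => ((avoids_iff_disjoint _).mp (hgR i)).1⟩
  have hUQ : Disjoint U Q := disjoint_union_left.mpr
    ⟨hU₀, (disjoint_biUnion_left _ _ _).mpr fun i _ => ((avoids_iff_disjoint _).mp (hgR i)).2⟩
  have hDa : #D ≤ a := by
    grw [card_union_le, card_biUnion_le_card_mul _ _ (Fintype.card β) fun i _ =>
      card_image_le.trans card_univ.le]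
    simpa using ha
  have hUb : #U ≤ b := by
    grw [card_union_le, card_biUnion_le_card_mul _ _ (#G.edgeFinset) fun i _ => card_image_le]
    simpa using hb
  obtain ⟨g', hg'⟩ := hsrc D U hDR hUQ hDa hUb
  refine ⟨g', hg'.mono subset_union_left subset_union_left, fun i => ?_⟩
  rw [← coe_image_toFun, ← coe_image_edgeMap]
  exact hg'.mono (coe_subset.mpr (subset_union_right.trans' (subset_biUnion_of_mem
    (fun i => univ.image (g i).toFun) (mem_univ i)))) (coe_subset.mpr (subset_union_right.trans'
    (subset_biUnion_of_mem (fun i => G.edgeFinset.image (g i).edgeMap) (mem_univ i))))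

/-- Serving the sources one at a time, each copy avoids everything used so far and the
reservations of the sources still to come. -/
theorem RobustlyEmbeds.exists_pairwise_avoids [Fintype β] [Fintype G.edgeSet] {a b ρ κ : ℕ} :
    ∀ {c : ℕ} {R : Fin c → Finset V} {Q : Fin c → Finset (Finset V)},
    Pairwise (Disjoint on R) → Pairwise (Disjoint on Q) → (∀ i, #(R i) ≤ ρ) →
    (∀ i, #(Q i) ≤ κ) → (∀ i, RobustlyEmbeds G H (R i) (Q i) a b) →
    ∀ {D₀ : Finset V} {U₀ : Finset (Finset V)}, (∀ i, Disjoint D₀ (R i)) →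
    (∀ i, Disjoint U₀ (Q i)) → #D₀ + c * (ρ + Fintype.card β) ≤ a →
    #U₀ + c * (κ + #G.edgeFinset) ≤ b →
    ∃ g : Fin c → BergeEmbedding G H, (∀ i, (g i).Avoids D₀ U₀) ∧
      Pairwise fun i j => (g i).Avoids (g j).verts (g j).hedges
  | 0, _, _, _, _, _, _, _, _, _, _, _, _, _ => ⟨finZeroElim, finZeroElim, finZeroElim⟩
  | c + 1, R, Q, hR, hQ, hRρ, hQκ, hsrc, D₀, U₀, hD₀, hU₀, ha, hb => by
    obtain ⟨g, hgD, hg⟩ := exists_pairwise_avoids (c := c) (R := R ∘ Fin.castSucc)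
      (Q := Q ∘ Fin.castSucc) (hR.comp_of_injective (Fin.castSucc_injective c))
      (hQ.comp_of_injective (Fin.castSucc_injective c)) (fun i => hRρ _) (fun i => hQκ _)
      (fun i => hsrc _) (D₀ := D₀ ∪ R (Fin.last c)) (U₀ := U₀ ∪ Q (Fin.last c))
      (fun i => disjoint_union_left.mpr ⟨hD₀ _, hR (Fin.castSucc_lt_last i).ne.symm⟩)
      (fun i => disjoint_union_left.mpr ⟨hU₀ _, hQ (Fin.castSucc_lt_last i).ne.symm⟩)
      (by grw [card_union_le, hRρ]; linarith) (by grw [card_union_le, hQκ]; linarith)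
    obtain ⟨g', hg'D, hg'g⟩ := (hsrc (Fin.last c)).exists_avoids_and_forall_avoids g
      (fun i => (hgD i).mono (by simp) (by simp)) (hD₀ _) (hU₀ _) (by nlinarith) (by nlinarith)
    refine ⟨Fin.lastCases g' g, fun i => ?_, fun i j hij => ?_⟩
    · induction i using Fin.lastCases with
      | last => simpa using hg'D
      | cast i => simpa using (hgD i).mono subset_union_left subset_union_left
    · induction i using Fin.lastCases with
      | last =>
        induction j using Fin.lastCases with
        | last => exact absurd rfl hij
        | cast j => simpa using hg'g j
      | cast i =>
        induction j using Fin.lastCases with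
        | last => simpa using (hg'g i).symm
        | cast j => simpa using hg (fun h => hij (congrArg _ h))

end Greedy

theorem eq_and_adj_of_matchingG_adj {t : ℕ} {i j : Fin t} {a b : Fin 2}
    (h : (matchingG t).Adj (i, a) (j, b)) :
    i = j ∧ (K₂).Adj a b := by
  rw [matchingG, SimpleGraph.fromRel_adj] at h
  obtain ⟨hne, hij | hij⟩ := h <;> subst hij <;> exact ⟨rfl, fun hab => hne (hab ▸ rfl)⟩

theorem eq_and_adj_of_starsG_adj {u : ℕ} {i j : Fin u} {a b : Fin 3}
    (h : (starsG u 2).Adj (i, a) (j, b)) :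
    i = j ∧ cherryGraph.Adj a b := by
  rw [starsG, SimpleGraph.fromRel_adj] at h
  obtain ⟨hne, ⟨hij, ha⟩ | ⟨hij, hb⟩⟩ := h <;> subst hij <;>
    refine ⟨rfl, (SimpleGraph.fromRel_adj _ _ _).mpr ⟨fun hab => hne (hab ▸ rfl), ?_⟩⟩
  exacts [.inl ha, .inr hb]

section Assembly

open BergeEmbedding Function

variable {V : Type*} [DecidableEq V] {H : Finset (Finset V)}

/-- The budgets `5 (t + u)` and `3 (t + u)` cover the reservations of all sources plus the at
most three vertices and two hyperedges of each component. -/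
theorem isBergeCopy_of_robustlyEmbeds {t u : ℕ} (R : Fin t ⊕ Fin u → Finset V)
    (Q : Fin t ⊕ Fin u → Finset (Finset V)) (hR : Pairwise (Disjoint on R))
    (hQ : Pairwise (Disjoint on Q)) (hR₂ : ∀ s, #(R s) ≤ 2) (hQ₁ : ∀ s, #(Q s) ≤ 1)
    (hpair : ∀ i, RobustlyEmbeds K₂ H (R (.inl i)) (Q (.inl i)) (5 * (t + u)) (3 * (t + u)))
    (hcherry : ∀ j, RobustlyEmbeds cherryGraph H (R (.inr j)) (Q (.inr j)) (5 * (t + u))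
      (3 * (t + u))) :
    IsBergeCopy ((matchingG t).sum (starsG u 2)) H := by
  have hK₂ : #(K₂).edgeFinset = 1 := by decide
  have hcherry₂ : #cherryGraph.edgeFinset = 2 := by decide
  obtain ⟨gp, hgpD, hgp⟩ := RobustlyEmbeds.exists_pairwise_avoids (ρ := 2) (κ := 1)
    (hR.comp_of_injective Sum.inl_injective) (hQ.comp_of_injective Sum.inl_injective)
    (fun i => hR₂ _) (fun i => hQ₁ _) hpair (D₀ := univ.biUnion fun j => R (.inr j))
    (U₀ := univ.biUnion fun j => Q (.inr j))
    (fun i => (disjoint_biUnion_left _ _ _).mpr fun j _ => hR Sum.inr_ne_inl)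
    (fun i => (disjoint_biUnion_left _ _ _).mpr fun j _ => hQ Sum.inr_ne_inl)
    (by grw [card_biUnion_le_card_mul _ _ 2 fun j _ => hR₂ _]; simp; lia)
    (by grw [card_biUnion_le_card_mul _ _ 1 fun j _ => hQ₁ _]
        simp only [card_univ, Fintype.card_fin, hK₂]; lia)
  obtain ⟨gc, hgcD, hgc⟩ := RobustlyEmbeds.exists_pairwise_avoids (ρ := 2) (κ := 1)
    (hR.comp_of_injective Sum.inr_injective) (hQ.comp_of_injective Sum.inr_injective)
    (fun j => hR₂ _) (fun j => hQ₁ _) hcherry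
    (D₀ := univ.biUnion fun i => univ.image (gp i).toFun)
    (U₀ := univ.biUnion fun i => (K₂).edgeFinset.image (gp i).edgeMap)
    (fun j => (disjoint_biUnion_left _ _ _).mpr fun i _ => by
      have := ((avoids_iff_disjoint _).mp (hgpD i)).1
      exact disjoint_biUnion_right _ _ _ |>.mp this j (mem_univ _))
    (fun j => (disjoint_biUnion_left _ _ _).mpr fun i _ => by
      have := ((avoids_iff_disjoint _).mp (hgpD i)).2
      exact disjoint_biUnion_right _ _ _ |>.mp this j (mem_univ _))
    (by grw [card_biUnion_le_card_mul _ _ 2 fun i _ => card_image_le]; simp; lia)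
    (by grw [card_biUnion_le_card_mul _ _ 1 fun i _ => card_image_le.trans hK₂.le]
        simp only [card_univ, Fintype.card_fin, hcherry₂]; lia)
  refine isBergeCopy_sum (glue (fun _ _ _ _ => eq_and_adj_of_matchingG_adj) gp hgp)
    (glue (fun _ _ _ _ => eq_and_adj_of_starsG_adj) gc hgc) (avoids_glue fun i => ?_)
  refine (avoids_iUnion.mpr fun j => ?_).mono (verts_glue.subset) hedges_glue_subset
  refine ((hgcD j).mono ?_ ?_).symm
  · rw [← coe_image_toFun]; exact fun x hx => mem_biUnion.mpr ⟨i, mem_univ _, hx⟩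
  · rw [← coe_image_edgeMap]; exact fun x hx => mem_biUnion.mpr ⟨i, mem_univ _, hx⟩

end Assembly

section Sources

variable {V : Type*} {H : Finset (Finset V)}

theorem avoids_pairEmbedding {x y : V} {e : Finset V} {hxy : x ≠ y} {hx : x ∈ e} {hy : y ∈ e}
    {he : e ∈ H} {D : Set V} {U : Set (Finset V)} (hxD : x ∉ D) (hyD : y ∉ D) (heU : e ∉ U) :
    (pairEmbedding hxy hx hy he).Avoids D U :=
  ⟨fun a => by fin_cases a <;> simpa [pairEmbedding], fun _ _ => heU⟩

theorem RobustlyEmbeds.pair_of_cherry {R : Finset V} {Q : Finset (Finset V)} {a b : ℕ}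
    (h : RobustlyEmbeds cherryGraph H R Q a b) : RobustlyEmbeds K₂ H R Q a b := by
  intro D U hD hU hDa hUb
  obtain ⟨g, hgD, hgU⟩ := h D U hD hU hDa hUb
  have h01 := mk_zero_mem_edgeSet_cherryGraph (c := 1) (by decide)
  exact ⟨pairEmbedding (g.injective.ne (by decide : (0 : Fin 3) ≠ 1))
    (g.mem_edgeMap _ h01 0 (by simp)) (g.mem_edgeMap _ h01 1 (by simp)) (g.edgeMap_mem _ h01),
    avoids_pairEmbedding (hgD 0) (hgD 1) (hgU _ h01)⟩

variable [DecidableEq V]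

theorem robustlyEmbeds_pair {x y : V} {e : Finset V} (hxy : x ≠ y) (hx : x ∈ e) (hy : y ∈ e)
    (he : e ∈ H) (a b : ℕ) : RobustlyEmbeds K₂ H {x, y} {e} a b :=
  fun D U hD hU _ _ => ⟨pairEmbedding hxy hx hy he,
    avoids_pairEmbedding (disjoint_right.mp hD (by simp)) (disjoint_right.mp hD (by simp))
      (disjoint_right.mp hU (mem_singleton_self e))⟩

def hdegree (H : Finset (Finset V)) (v : V) : ℕ := #{e ∈ H | v ∈ e}

theorem exists_mem_not_subset_of_two_pow_lt {A : Finset (Finset V)} {W : Finset V}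
    (h : 2 ^ #W < #A) : ∃ e ∈ A, ¬ e ⊆ W := by
  by_contra! hA
  exact (card_le_card fun e he => mem_powerset.mpr (hA e he)).trans_eq (card_powerset W)
    |>.not_gt h

/-- At most `2 ^ (a + 2)` hyperedges lie inside `v`, the forbidden vertices and one more vertex,
so among the many hyperedges through `v` two supply fresh leaves. -/
theorem robustlyEmbeds_cherry_of_le_hdegree {v : V} {a b : ℕ}
    (h : 2 ^ (a + 3) + b + 2 ≤ hdegree H v) : RobustlyEmbeds cherryGraph H {v} ∅ a b := by
  intro D U hD _ hDa hUb
  set A := {e ∈ H | v ∈ e} \ U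
  have hA : 2 ^ (a + 3) + 2 ≤ #A := by
    have := card_le_card_sdiff_add_card (s := {e ∈ H | v ∈ e}) (t := U)
    rw [hdegree] at h; lia
  have hpow : ∀ {W : Finset V}, #W ≤ a + 2 → 2 ^ #W < 2 ^ (a + 3) :=
    fun hW => Nat.pow_lt_pow_right (by norm_num) (by lia)
  obtain ⟨e, heA, hex⟩ := exists_mem_not_subset_of_two_pow_lt (W := insert v D) (A := A)
    (by grw [hpow (by grw [card_insert_le]; lia)]; lia)
  obtain ⟨x, hxe, hxD⟩ := not_subset.mp hex
  obtain ⟨f, hfA, hfx⟩ := exists_mem_not_subset_of_two_pow_lt (W := insert x (insert v D))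
    (A := A.erase e) (by grw [hpow (by grw [card_insert_le, card_insert_le]; lia),
      card_erase_of_mem heA]; lia)
  obtain ⟨z, hzf, hzD⟩ := not_subset.mp hfx
  simp only [A, mem_sdiff, mem_filter, mem_erase, mem_insert, not_or] at heA hfA hxD hzD
  exact ⟨cherryEmbedding (Ne.symm hxD.1) (Ne.symm hzD.2.1) (Ne.symm hzD.1) heA.1.2 hxe hfA.2.1.2
    hzf heA.1.1 hfA.2.1.1 (Ne.symm hfA.1), fun c => by
      fin_cases c <;>
        simp [cherryEmbedding, disjoint_right.mp hD (mem_singleton_self v), hxD.2, hzD.2.2],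
    fun s _ => by simp only [cherryEmbedding]; split_ifs <;> simp [hfA.2.2, heA.2]⟩

end Sources

section LowVertices

variable {V : Type*} [DecidableEq V] {H : Finset (Finset V)} {S : Finset V} {d r : ℕ}

theorem card_filter_not_disjoint_le {W : Finset V} (hW : ∀ w ∈ W, hdegree H w ≤ d) :
    #{e ∈ H | ¬ Disjoint e W} ≤ #W * d := by
  refine (card_le_card fun e he => ?_).trans (card_biUnion_le_card_mul W _ d hW)
  obtain ⟨heH, hW⟩ := mem_filter.mp he
  obtain ⟨w, hwe, hwW⟩ := not_disjoint_iff.mp hW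
  exact mem_biUnion.mpr ⟨w, hwW, mem_filter.mpr ⟨heH, hwe⟩⟩

/-- Each forbidden vertex outside `S` spoils at most `d` of the hyperedges with two vertices
outside `S`. -/
theorem robustlyEmbeds_pair_of_card (hlow : ∀ v ∉ S, hdegree H v ≤ d) {a b : ℕ}
    (hB : b + a * d < #{e ∈ H | 2 ≤ #(e \ S)}) :
    RobustlyEmbeds K₂ H ∅ ∅ a b := by
  intro D U _ _ hDa hUb
  have hbad : #(U ∪ {e ∈ H | ¬ Disjoint e (D \ S)}) < #{e ∈ H | 2 ≤ #(e \ S)} := by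
    grw [card_union_le, card_filter_not_disjoint_le (W := D \ S) fun w hw =>
      hlow w (mem_sdiff.mp hw).2, card_le_card (sdiff_subset (s := D) (t := S))]
    nlinarith
  obtain ⟨e, he, hebad⟩ := exists_mem_notMem_of_card_lt_card hbad
  simp only [mem_filter, mem_union, not_or, not_and, not_not] at he hebad
  obtain ⟨x, hx, y, hy, hxy⟩ := one_lt_card.mp he.2
  have hD : ∀ w ∈ e \ S, w ∉ D := fun w hw hwD =>
    disjoint_left.mp (hebad.2 he.1) (mem_sdiff.mp hw).1 (mem_sdiff.mpr ⟨hwD, (mem_sdiff.mp hw).2⟩)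
  exact ⟨pairEmbedding hxy (mem_sdiff.mp hx).1 (mem_sdiff.mp hy).1 he.1,
    avoids_pairEmbedding (by simpa using hD x hx) (by simpa using hD y hy) (by simpa using hebad.1)⟩

def HasCherryOff (H : Finset (Finset V)) (S : Finset V) (v : V) : Prop :=
  ∃ g : BergeEmbedding cherryGraph H, g.toFun 0 = v ∧ g.Avoids S ∅

/-- A forbidden vertex or hyperedge spoils only the cherries of the few centres that share a
hyperedge with it. -/
theorem robustlyEmbeds_cherry_of_card (huni : ∀ e ∈ H, #e ≤ r)
    (hlow : ∀ v ∉ S, hdegree H v ≤ d) {X : Finset V} (hX : ∀ v ∈ X, HasCherryOff H S v)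
    {a b : ℕ} (hcard : a * (d * r + 1) + b * r < #X) :
    RobustlyEmbeds cherryGraph H ∅ ∅ a b := by
  intro D U _ _ hDa hUb
  choose g hg0 hgS using hX
  set bad := D ∪ {e ∈ H | ¬ Disjoint e (D \ S)}.biUnion id ∪ {e ∈ U | e ∈ H}.biUnion id
  have hbad : #bad < #X := by
    grw [card_union_le, card_union_le,
      card_biUnion_le_card_mul _ id r fun e he => huni e (mem_filter.mp he).1,
      card_biUnion_le_card_mul _ id r fun e he => huni e (mem_filter.mp he).2,
      card_filter_not_disjoint_le (W := D \ S) fun w hw => hlow w (mem_sdiff.mp hw).2,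
      card_le_card (sdiff_subset (s := D) (t := S)), card_le_card (filter_subset _ U)]
    have := Nat.mul_le_mul_right (d * r) hDa
    have := Nat.mul_le_mul_right r hUb
    nlinarith
  obtain ⟨v, hvX, hvbad⟩ := exists_mem_notMem_of_card_lt_card hbad
  simp only [bad, mem_union, mem_biUnion, mem_filter, id, not_or, not_exists, not_and] at hvbad
  refine ⟨g v hvX, fun c hc => ?_, fun s hs hsU => ?_⟩
  · by_cases hc0 : c = 0
    · exact hvbad.1.1 (by rwa [hc0, hg0] at hc)
    · have hs := mk_zero_mem_edgeSet_cherryGraph hc0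
      have hmem := (g v hvX).mem_edgeMap _ hs
      refine hvbad.1.2 _ ⟨(g v hvX).edgeMap_mem _ hs, not_disjoint_iff.mpr ⟨_, hmem c (by simp),
        mem_sdiff.mpr ⟨hc, (hgS v hvX).1 c⟩⟩⟩ ?_
      simpa [hg0] using hmem 0 (by simp)
  · refine hvbad.2 _ ⟨hsU, (g v hvX).edgeMap_mem _ hs⟩ ?_
    simpa [hg0] using (g v hvX).mem_edgeMap _ hs 0 (zero_mem_of_mem_edgeSet_cherryGraph hs)

/-- At a low vertex `v` that centres no cherry off `S`, two hyperedges through `v` with two low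
vertices each share their low part `{v, x}`, so they differ only inside `S`. -/
theorem card_filter_mem_le_of_not_hasCherryOff (huni : ∀ e ∈ H, #e = r) {v : V} (hv : v ∉ S)
    (hvX : ¬ HasCherryOff H S v) :
    #{e ∈ H | 2 ≤ #(e \ S) ∧ v ∈ e} ≤ max 1 ((#S).choose (r - 2)) := by
  set Bv := {e ∈ H | 2 ≤ #(e \ S) ∧ v ∈ e}
  have hsub : ∀ e ∈ Bv, ∀ f ∈ Bv, e ≠ f → ∀ x ∈ e \ S, x ≠ v → f \ S ⊆ {v, x} := by
    intro e he f hf hef x hx hxv z hz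
    by_contra hzvx
    simp only [mem_insert, mem_singleton, not_or] at hzvx
    simp only [Bv, mem_filter] at he hf
    refine hvX ⟨cherryEmbedding (Ne.symm hxv) (Ne.symm hzvx.1) (Ne.symm hzvx.2) he.2.2
      (mem_sdiff.mp hx).1 hf.2.2 (mem_sdiff.mp hz).1 he.1 hf.1 hef, rfl, fun c => ?_, by simp⟩
    fin_cases c <;> simp [cherryEmbedding, hv, (mem_sdiff.mp hx).2, (mem_sdiff.mp hz).2]
  rcases le_or_gt #Bv 1 with h | h
  · exact h.trans (le_max_left _ _)
  obtain ⟨e₀, he₀, f₀, hf₀, hef₀⟩ := one_lt_card.mp h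
  have hBv2 : ∀ e ∈ Bv, 2 ≤ #(e \ S) := fun e he => (mem_filter.mp he).2.1
  obtain ⟨x, hx, hxv⟩ := exists_mem_ne (hBv2 e₀ he₀) v
  have hpair : #({v, x} : Finset V) = 2 := card_pair (Ne.symm hxv)
  have hf₀S : f₀ \ S = {v, x} :=
    eq_of_subset_of_card_le (hsub e₀ he₀ f₀ hf₀ hef₀ x hx hxv) (hpair ▸ hBv2 f₀ hf₀)
  have hlow : ∀ e ∈ Bv, e \ S = {v, x} := by
    intro e he
    refine eq_of_subset_of_card_le ?_ (hpair ▸ hBv2 e he)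
    by_cases hee₀ : e = e₀
    · subst hee₀
      exact hsub f₀ hf₀ e he (Ne.symm hef₀) x (by simp [hf₀S]) hxv
    · exact hsub e₀ he₀ e he (Ne.symm hee₀) x hx hxv
  calc #Bv ≤ #(S.powersetCard (r - 2)) := by
        refine card_le_card_of_injOn (· ∩ S) (fun e he => mem_powersetCard.mpr
          ⟨inter_subset_right, ?_⟩) fun e he f hf hef => ?_
        · have := card_sdiff_add_card_inter e S
          rw [hlow e he, hpair, huni e (mem_filter.mp he).1] at this
          lia
        · rw [← sdiff_union_inter e S, ← sdiff_union_inter f S, hlow e he, hlow f hf]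
          exact congrArg _ hef
    _ ≤ max 1 ((#S).choose (r - 2)) := (card_powersetCard _ _).trans_le (le_max_right _ _)

theorem two_mul_card_filter_le [Fintype V] (huni : ∀ e ∈ H, #e = r)
    (hlow : ∀ v ∉ S, hdegree H v ≤ d) {X : Finset V}
    (hX : ∀ v ∉ S, HasCherryOff H S v → v ∈ X) :
    2 * #{e ∈ H | 2 ≤ #(e \ S)} ≤ #X * d + max 1 ((#S).choose (r - 2)) * Fintype.card V := by
  set B := {e ∈ H | 2 ≤ #(e \ S)}
  have hdeg : ∀ v ∈ Sᶜ,
      #{e ∈ B | v ∈ e} ≤ (if v ∈ X then d else 0) + max 1 ((#S).choose (r - 2)) := by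
    intro v hv
    rw [mem_compl] at hv
    split_ifs with hvX
    · exact (card_le_card (filter_subset_filter _ (filter_subset _ H))).trans (hlow v hv) |>.trans
        (Nat.le_add_right _ _)
    · rw [filter_filter, zero_add]
      exact card_filter_mem_le_of_not_hasCherryOff huni hv fun h => hvX (hX v hv h)
  calc 2 * #B = ∑ _e ∈ B, 2 := by rw [sum_const, smul_eq_mul, mul_comm]
    _ ≤ ∑ e ∈ B, #(Sᶜ ∩ e) := sum_le_sum fun e he => by
        rw [inter_comm, ← sdiff_eq_inter_compl]; exact (mem_filter.mp he).2
    _ = ∑ v ∈ Sᶜ, #{e ∈ B | v ∈ e} := by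
        simp_rw [← filter_mem_eq_inter, card_eq_sum_ones, sum_filter]; exact sum_comm
    _ ≤ ∑ v ∈ Sᶜ, ((if v ∈ X then d else 0) + max 1 ((#S).choose (r - 2))) := sum_le_sum hdeg
    _ ≤ #X * d + max 1 ((#S).choose (r - 2)) * Fintype.card V := by
        rw [sum_add_distrib, sum_ite_mem, sum_const, sum_const, smul_eq_mul, smul_eq_mul,
          mul_comm (#Sᶜ)]
        exact add_le_add (Nat.mul_le_mul_right _ (card_le_card inter_subset_right))
          (Nat.mul_le_mul_left _ (card_le_univ _))

end LowVertices

section Hosts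

open Function

/-- The degree bound of `robustlyEmbeds_cherry_of_le_hdegree` at the budgets `5 k`, `3 k` of
`isBergeCopy_of_robustlyEmbeds`, for `k` components. -/
def hostDegree (k : ℕ) : ℕ := 2 ^ (5 * k + 3) + 3 * k + 2

variable {V : Type*} [DecidableEq V] {H : Finset (Finset V)}

/-- Each of the `t + u` hosts in `S` serves one of the components other than the first edge. -/
theorem isBergeCopy_of_robustlyEmbeds_of_le_hdegree {t u : ℕ} {R₀ : Finset V}
    {Q₀ : Finset (Finset V)}
    (h₀ : RobustlyEmbeds K₂ H R₀ Q₀ (5 * (t + 1 + u)) (3 * (t + 1 + u)))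
    (hR₀ : #R₀ ≤ 2) (hQ₀ : #Q₀ ≤ 1) {S : Finset V} (hS : t + u ≤ #S) (hSR₀ : Disjoint S R₀)
    (hdeg : ∀ v ∈ S, hostDegree (t + 1 + u) ≤ hdegree H v) :
    IsBergeCopy ((matchingG (t + 1)).sum (starsG u 2)) H := by
  let h : Fin t ⊕ Fin u → V := fun s => S.equivFin.symm (Fin.castLE hS (finSumFinEquiv s))
  have hinj : Injective h := Subtype.val_injective.comp <| S.equivFin.symm.injective.comp <|
    (Fin.castLE_injective hS).comp finSumFinEquiv.injective
  have hhS : ∀ s, h s ∈ S := fun s => (S.equivFin.symm _).2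
  let slot : Fin (t + 1) ⊕ Fin u → Option (Fin t ⊕ Fin u) :=
    Sum.elim (Fin.cases none fun i => some (.inl i)) fun j => some (.inr j)
  have hslot : Injective slot := by
    rintro (i | j) (i' | j') hii' <;>
      [cases i using Fin.cases <;> cases i' using Fin.cases; cases i using Fin.cases;
        cases i' using Fin.cases; skip] <;> simp_all [slot]
  let R : Fin (t + 1) ⊕ Fin u → Finset V := fun s => (slot s).elim R₀ fun p => {h p}
  let Q : Fin (t + 1) ⊕ Fin u → Finset (Finset V) := fun s => (slot s).elim Q₀ fun _ => ∅
  have hR : Pairwise (Disjoint on R) := by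
    intro s s' hss'
    have := hslot.ne hss'
    simp only [onFun, R]
    rcases hs : slot s with _ | p <;> rcases hs' : slot s' with _ | p' <;> rw [hs, hs'] at this
    · exact absurd rfl this
    · exact disjoint_singleton_right.mpr (disjoint_left.mp hSR₀ (hhS p'))
    · exact disjoint_singleton_left.mpr (disjoint_left.mp hSR₀ (hhS p))
    · exact disjoint_singleton.mpr (hinj.ne fun hpp => this (congrArg some hpp))
  have hQ : Pairwise (Disjoint on Q) := by
    intro s s' hss'
    have := hslot.ne hss'
    simp only [onFun, Q]
    rcases hs : slot s with _ | p <;> rcases hs' : slot s' with _ | p' <;> rw [hs, hs'] at this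
    · exact absurd rfl this
    all_goals simp
  have hhost : ∀ p, RobustlyEmbeds cherryGraph H {h p} ∅ (5 * (t + 1 + u)) (3 * (t + 1 + u)) :=
    fun p => robustlyEmbeds_cherry_of_le_hdegree (hdeg _ (hhS p))
  refine isBergeCopy_of_robustlyEmbeds R Q hR hQ (fun s => ?_) (fun s => ?_) (fun i => ?_)
    (fun j => hhost (.inr j))
  · simp only [R]; rcases slot s with _ | p <;> simp [hR₀]
  · simp only [Q]; rcases slot s with _ | p <;> simp [hQ₀]
  · cases i using Fin.cases
    · exact h₀
    · exact (hhost (.inl _)).pair_of_cherry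

end Hosts

section Counting

variable {V : Type*} [Fintype V] [DecidableEq V]

/-- The `r`-sets with at most one vertex outside `K`: those inside `K`, and those of the form
`insert x T` with `x ∉ K` and `T` an `(r-1)`-subset of `K`. -/
theorem card_filter_card_sdiff_le_one (K : Finset V) {r : ℕ} (hr : 1 ≤ r) :
    #{e ∈ powersetCard r (univ : Finset V) | #(e \ K) ≤ 1} =
      (#K).choose r + (#K).choose (r - 1) * (Fintype.card V - #K) := by
  set A := {e ∈ powersetCard r (univ : Finset V) | #(e \ K) ≤ 1}
  have hinsert : ∀ {x : V} {T : Finset V}, x ∉ K → T ⊆ K →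
      insert x T \ K = {x} ∧ insert x T ∩ K = T :=
    fun hx hT => ⟨by rw [insert_sdiff_of_notMem _ hx, sdiff_eq_empty_iff_subset.mpr hT]; rfl,
      by rw [insert_inter_of_notMem hx, inter_eq_left.mpr hT]⟩
  have h₀ : {e ∈ A | #(e \ K) = 0} = powersetCard r K := by
    ext e
    simp only [A, mem_filter, mem_powersetCard, subset_univ, true_and, card_eq_zero,
      sdiff_eq_empty_iff_subset]
    constructor
    · rintro ⟨⟨her, -⟩, heK⟩; exact ⟨heK, her⟩
    · rintro ⟨heK, her⟩; exact ⟨⟨her, by simp [sdiff_eq_empty_iff_subset.mpr heK]⟩, heK⟩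
  have h₁ : {e ∈ A | ¬ #(e \ K) = 0} = (Kᶜ ×ˢ powersetCard (r - 1) K).image
      fun p => insert p.1 p.2 := by
    ext e
    simp only [A, mem_filter, mem_powersetCard, subset_univ, true_and, mem_image, mem_product,
      mem_compl, Prod.exists]
    constructor
    · rintro ⟨⟨her, he1⟩, he0⟩
      obtain ⟨x, hx⟩ := card_eq_one.mp (by lia : #(e \ K) = 1)
      have hxK : x ∈ e \ K := hx ▸ mem_singleton_self x
      have := card_sdiff_add_card_inter e K
      refine ⟨x, e ∩ K, ⟨(mem_sdiff.mp hxK).2, inter_subset_right, by lia⟩, ?_⟩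
      rw [insert_eq, ← hx, sdiff_union_inter]
    · rintro ⟨x, T, ⟨hx, hTK, hTr⟩, rfl⟩
      have hxT : x ∉ T := fun h => hx (hTK h)
      rw [card_insert_of_notMem hxT, (hinsert hx hTK).1]
      simp; lia
  have hinj : Set.InjOn (fun p : V × Finset V => insert p.1 p.2)
      (Kᶜ ×ˢ powersetCard (r - 1) K : Finset _) := by
    rintro ⟨x, T⟩ hxT ⟨x', T'⟩ hxT' h
    simp only [mem_coe, mem_product, mem_compl, mem_powersetCard] at hxT hxT'
    have h₁ := congrArg (· \ K) h
    have h₂ := congrArg (· ∩ K) h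
    simp only [(hinsert hxT.1 hxT.2.1).1, (hinsert hxT'.1 hxT'.2.1).1,
      (hinsert hxT.1 hxT.2.1).2, (hinsert hxT'.1 hxT'.2.1).2, singleton_inj] at h₁ h₂
    rw [h₁, h₂]
  rw [← card_filter_add_card_filter_not (fun e => #(e \ K) = 0), h₀, h₁,
    card_image_of_injOn hinj, card_product, card_powersetCard, card_powersetCard, card_compl,
    mul_comm]

end Counting

section LowerBound

open Function

variable {α ι V : Type*} [DecidableEq V]

/-- Each edge of a Berge copy has an endpoint in `K`, and disjoint edges have distinct ones. -/
theorem not_isBergeCopy_of_card_sdiff_le_one [Fintype ι] {F : SimpleGraph α} (p q : ι → α)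
    (hpq : ∀ i, F.Adj (p i) (q i)) (hinj : Injective (Sum.elim p q)) {H : Finset (Finset V)}
    {K : Finset V} (hH : ∀ e ∈ H, #(e \ K) ≤ 1) (hK : #K < Fintype.card ι) :
    ¬ IsBergeCopy F H := by
  classical
  rintro ⟨f, φ, hf, -, hφ⟩
  let c : ι → α := fun i => if f (p i) ∈ K then p i else q i
  have hcK : ∀ i, f (c i) ∈ K := by
    intro i
    by_contra hout
    obtain ⟨hφH, hφf⟩ := hφ s(p i, q i) (hpq i)
    have hpK : f (p i) ∉ K := fun h => hout (by simp [c, h])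
    have hqK : f (q i) ∉ K := fun h => hout (by simpa [c, hpK] using h)
    refine (hH _ hφH).not_gt (one_lt_card.mpr ⟨f (p i), ?_, f (q i), ?_, ?_⟩)
    · exact mem_sdiff.mpr ⟨hφf _ (Sym2.mem_mk_left _ _), hpK⟩
    · exact mem_sdiff.mpr ⟨hφf _ (Sym2.mem_mk_right _ _), hqK⟩
    · exact hf.ne ((hpq i).ne)
  have hc : Injective c := by
    intro i j hij
    simp only [c] at hij
    split_ifs at hij
    · exact Sum.inl_injective (hinj hij)
    · exact absurd (hinj (a₁ := .inl i) (a₂ := .inr j) hij) Sum.inl_ne_inr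
    · exact absurd (hinj (a₁ := .inr i) (a₂ := .inl j) hij) Sum.inr_ne_inl
    · exact Sum.inr_injective (hinj (a₁ := .inr i) (a₂ := .inr j) hij)
  exact hK.not_ge (card_le_card_of_injOn (f ∘ c) (fun i _ => hcK i)
    (fun i _ j _ h => hc (hf h)) |>.trans_eq' (card_univ).symm)

theorem not_isBergeCopy_matchingG_sum_starsG {t u : ℕ} {H : Finset (Finset V)} {K : Finset V}
    (hH : ∀ e ∈ H, #(e \ K) ≤ 1) (hK : #K < t + u) :
    ¬ IsBergeCopy ((matchingG t).sum (starsG u 2)) H := by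
  refine not_isBergeCopy_of_card_sdiff_le_one (ι := Fin t ⊕ Fin u)
    (Sum.elim (fun i => .inl (i, 0)) fun j => .inr (j, 0))
    (Sum.elim (fun i => .inl (i, 1)) fun j => .inr (j, 1)) ?_ ?_ hH (by simpa using hK)
  · rintro (i | j) <;> simp [matchingG, starsG]
  · rintro ((i | j) | (i | j)) ((i' | j') | (i' | j')) h <;> simp_all

end LowerBound

theorem choose_sub_one_add_max_le {s m r : ℕ} (hs : s < m) (hr : 2 ≤ r) (hrm : r ≤ m + 1) :
    s.choose (r - 1) + max 1 (s.choose (r - 2)) ≤ m.choose (r - 1) := by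
  obtain ⟨m, rfl⟩ : ∃ m', m = m' + 1 := ⟨m - 1, by lia⟩
  obtain ⟨r, rfl⟩ : ∃ r', r = r' + 2 := ⟨r - 2, by lia⟩
  rw [Nat.add_sub_cancel, show r + 2 - 1 = r + 1 by lia]
  rcases le_total 1 (s.choose r) with h | h
  · rw [max_eq_right h, add_comm, ← Nat.choose_succ_succ]
    exact Nat.choose_le_choose _ (by lia)
  · rw [max_eq_left h, Nat.choose_succ_succ]
    have := Nat.choose_le_choose (r + 1) (show s ≤ m by lia)
    have := Nat.choose_pos (show r ≤ m by lia)
    lia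

/-- By `choose_sub_one_add_max_le` the coefficient of `n` drops by at least
`q = max 1 (s.choose (r - 2))`, which absorbs `β ≤ (C₀ + q n) / 2`. -/
theorem add_le_choose_mul_sub_add {s m r n β C₀ : ℕ} (hs : s < m) (hr : 2 ≤ r) (hrm : r ≤ m + 1)
    (hβ : 2 * β ≤ C₀ + max 1 (s.choose (r - 2)) * n) (hn : C₀ + 2 * m * m.choose (r - 1) ≤ n) :
    s.choose r + s.choose (r - 1) * (n - s) + β ≤ m.choose (r - 1) * (n - m) + m.choose r := by
  have hpq := choose_sub_one_add_max_le hs hr hrm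
  have hsr := Nat.choose_le_choose r hs.le
  have hsn : s.choose (r - 1) * (n - s) ≤ s.choose (r - 1) * n := Nat.mul_le_mul_left _ (by lia)
  have hc : 1 ≤ m.choose (r - 1) := Nat.choose_pos (by lia)
  have hmn : m ≤ n := by nlinarith
  obtain ⟨n, rfl⟩ : ∃ n', n = m + n' := ⟨n - m, by lia⟩
  rw [Nat.add_sub_cancel_left]
  have h1 := Nat.mul_le_mul_right (m + n) hpq
  have h2 := Nat.mul_le_mul_right (m + n) (le_max_left 1 (s.choose (r - 2)))
  nlinarith

section UpperBound

variable {V : Type*} [Fintype V] [DecidableEq V] {H : Finset (Finset V)} {t u r : ℕ}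

theorem card_le_add_card_filter (huni : ∀ e ∈ H, #e = r) (hr : 1 ≤ r) (S : Finset V) :
    #H ≤ (#S).choose r + (#S).choose (r - 1) * (Fintype.card V - #S) +
      #{e ∈ H | 2 ≤ #(e \ S)} := by
  rw [← card_filter_card_sdiff_le_one S hr,
    ← card_filter_add_card_filter_not (fun e => #(e \ S) ≤ 1),
    filter_congr fun e _ => not_le (b := 1)]
  refine Nat.add_le_add_right (card_le_card fun e he => ?_) _
  simp only [mem_filter, mem_powersetCard, subset_univ, true_and] at he ⊢
  exact ⟨huni e he.1, he.2⟩

def highVertices (H : Finset (Finset V)) (d : ℕ) : Finset V := {v | d ≤ hdegree H v}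

theorem hdegree_le_of_notMem_highVertices {d : ℕ} {v : V} (hv : v ∉ highVertices H d) :
    hdegree H v ≤ d := by
  simp only [highVertices, mem_filter, mem_univ, true_and, not_le] at hv
  exact hv.le

theorem card_highVertices_le (hfree : ¬ IsBergeCopy ((matchingG (t + 1)).sum (starsG u 2)) H) :
    #(highVertices H (hostDegree (t + 1 + u))) ≤ t + u := by
  set S := highVertices H (hostDegree (t + 1 + u))
  have hS : ∀ v ∈ S, hostDegree (t + 1 + u) ≤ hdegree H v := fun v hv => (mem_filter.mp hv).2
  by_contra! h
  obtain ⟨v, hv⟩ : S.Nonempty := card_pos.mp (by lia)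
  exact hfree <| isBergeCopy_of_robustlyEmbeds_of_le_hdegree
    (robustlyEmbeds_cherry_of_le_hdegree (hS v hv)).pair_of_cherry (by simp) (by simp)
    (by rw [card_erase_of_mem hv]; lia)
    (disjoint_singleton_right.mpr (notMem_erase v S)) fun w hw => hS w (mem_of_mem_erase hw)

theorem filter_two_le_card_sdiff_highVertices_eq_empty
    (hfree : ¬ IsBergeCopy ((matchingG (t + 1)).sum (starsG u 2)) H)
    (hS : t + u ≤ #(highVertices H (hostDegree (t + 1 + u)))) :
    {e ∈ H | 2 ≤ #(e \ highVertices H (hostDegree (t + 1 + u)))} = ∅ := by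
  set S := highVertices H (hostDegree (t + 1 + u))
  refine eq_empty_of_forall_notMem fun e he => hfree ?_
  obtain ⟨heH, he⟩ := mem_filter.mp he
  obtain ⟨x, hx, y, hy, hxy⟩ := one_lt_card.mp he
  simp only [mem_sdiff] at hx hy
  exact isBergeCopy_of_robustlyEmbeds_of_le_hdegree (robustlyEmbeds_pair hxy hx.1 hy.1 heH _ _)
    (card_le_two) (card_singleton _).le hS (by simp [hx.2, hy.2])
    fun v hv => (mem_filter.mp hv).2

theorem two_mul_card_filter_le_of_not_isBergeCopy (huni : ∀ e ∈ H, #e = r)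
    (hfree : ¬ IsBergeCopy ((matchingG (t + 1)).sum (starsG u 2)) H) :
    let a := 5 * (t + 1 + u); let b := 3 * (t + 1 + u); let d := hostDegree (t + 1 + u)
    let S := highVertices H d
    2 * #{e ∈ H | 2 ≤ #(e \ S)} ≤ 2 * (b + a * d) + (a * (d * r + 1) + b * r) * d +
      max 1 ((#S).choose (r - 2)) * Fintype.card V := by
  intro a b d S
  classical
  have hlow : ∀ v ∉ S, hdegree H v ≤ d := fun v hv => hdegree_le_of_notMem_highVertices hv
  set X := ({v | HasCherryOff H S v} : Finset V)
  by_cases hB : #{e ∈ H | 2 ≤ #(e \ S)} ≤ b + a * d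
  · lia
  by_cases hX : #X ≤ a * (d * r + 1) + b * r
  · grw [two_mul_card_filter_le huni hlow (X := X) fun v _ hv => mem_filter.mpr ⟨mem_univ v, hv⟩,
      hX]
    lia
  refine absurd (isBergeCopy_of_robustlyEmbeds (fun _ => ∅) (fun _ => ∅) (by simp [Pairwise])
    (by simp [Pairwise]) (by simp) (by simp) (fun _ => robustlyEmbeds_pair_of_card hlow ?_)
    (fun _ => robustlyEmbeds_cherry_of_card (fun e he => (huni e he).le) hlow (X := X)
      (fun v hv => (mem_filter.mp hv).2) ?_)) hfree <;> lia

end UpperBound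

theorem exists_not_isBergeCopy_card_eq {V : Type*} [Fintype V] [DecidableEq V] {t u r : ℕ}
    (hr : 1 ≤ r) (hV : t + u ≤ Fintype.card V) :
    ∃ H : Finset (Finset V), (∀ e ∈ H, #e = r) ∧
      ¬ IsBergeCopy ((matchingG (t + 1)).sum (starsG u 2)) H ∧
      #H = (t + u).choose (r - 1) * (Fintype.card V - (t + u)) + (t + u).choose r := by
  obtain ⟨K, -, hK⟩ :=
    (univ : Finset V).exists_subset_card_eq (show t + u ≤ #univ by simpa using hV)
  refine ⟨{e ∈ powersetCard r (univ : Finset V) | #(e \ K) ≤ 1}, fun e he => ?_,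
    not_isBergeCopy_matchingG_sum_starsG (fun e he => (mem_filter.mp he).2) (by lia), ?_⟩
  · exact (mem_powersetCard.mp (mem_filter.mp he).1).2
  · rw [card_filter_card_sdiff_le_one K hr, hK, add_comm]

theorem card_le_of_not_isBergeCopy {t u r : ℕ} (hr : 2 ≤ r) (hrk : r ≤ t + u + 1) :
    ∃ N, ∀ {V : Type*} [Fintype V] [DecidableEq V] (H : Finset (Finset V)),
      N ≤ Fintype.card V → (∀ e ∈ H, #e = r) →
      ¬ IsBergeCopy ((matchingG (t + 1)).sum (starsG u 2)) H →
      #H ≤ (t + u).choose (r - 1) * (Fintype.card V - (t + u)) + (t + u).choose r := by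
  let a := 5 * (t + 1 + u); let b := 3 * (t + 1 + u); let d := hostDegree (t + 1 + u)
  refine ⟨2 * (b + a * d) + (a * (d * r + 1) + b * r) * d + 2 * (t + u) * (t + u).choose (r - 1),
    fun H hn huni hfree => ?_⟩
  have hH := card_le_add_card_filter huni (by lia) (highVertices H d)
  rcases (card_highVertices_le hfree).lt_or_eq with hlt | heq
  · exact hH.trans (add_le_choose_mul_sub_add hlt hr (by lia)
      (two_mul_card_filter_le_of_not_isBergeCopy huni hfree) hn)
  · rw [filter_two_le_card_sdiff_highVertices_eq_empty hfree heq.ge, heq] at hH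
    simpa [add_comm] using hH

theorem ex_berge_matching_union_stars_general (k r t : ℕ) (hr2 : 2 ≤ r)
    (hrk : r ≤ k) (ht1 : 1 ≤ t) (htk : t ≤ k) :
    ∃ N, ∀ n ≥ N,
      exBerge r n ((matchingG t).sum (starsG (k - t) 2)) =
        (k - 1).choose (r - 1) * (n - k + 1) + (k - 1).choose r := by
  obtain ⟨t, rfl⟩ : ∃ t', t = t' + 1 := ⟨t - 1, by lia⟩
  obtain ⟨u, rfl⟩ : ∃ u, k = t + 1 + u := ⟨k - (t + 1), by lia⟩
  obtain ⟨N, hN⟩ := card_le_of_not_isBergeCopy (t := t) (u := u) hr2 (by lia)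
  refine ⟨max N (t + 1 + u), fun n hn => ?_⟩
  rw [show t + 1 + u - (t + 1) = u by lia, show t + 1 + u - 1 = t + u by lia,
    show n - (t + 1 + u) + 1 = n - (t + u) by lia]
  obtain ⟨H, huni, hfree, hcard⟩ :=
    exists_not_isBergeCopy_card_eq (V := Fin n) (t := t) (u := u) (r := r) (by lia) (by simp; lia)
  refine IsGreatest.csSup_eq ⟨⟨H, huni, hfree, by simpa using hcard⟩, ?_⟩
  rintro m ⟨H, huni, hfree, rfl⟩
  simpa using hN H (by simp; lia) huni hfree

theorem ex_berge_matching_union_stars (k r t : ℕ) (hk : 2 ≤ k) (hr2 : 2 ≤ r)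
    (hrk : r ≤ k) (ht1 : 1 ≤ t) (htk : t ≤ k) :
    ∃ N, ∀ n ≥ N,
      exBerge r n ((matchingG t).sum (starsG (k - t) 2)) =
        (k - 1).choose (r - 1) * (n - k + 1) + (k - 1).choose r :=
  ex_berge_matching_union_stars_general k r t hr2 hrk ht1 htk
end

section
/- Let k ≥ 2, ℓ₁ ≥ 3, ℓ₂ ≥ 2 and r ≥ ℓ₁ + ℓ₂ + k - 1 be integers, and set ℓ_min = min{ℓ₁, ℓ₂}. For sufficiently large n, there exists an n-vertex r-uniform hypergraph with (ℓ_min - 1)·⌊(n-k+1)/(r-k+2)⌋ hyperedges that contains no Berge copy of P_{ℓ₁} ∪ (k-1)S_{ℓ₂}. Hence ex_r(n, Berge-P_{ℓ₁} ∪ (k-1)S_{ℓ₂}) ≥ (ℓ_min - 1)·⌊(n-k+1)/(r-k+2)⌋. -/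
open Finset

/-!
Take a core `A` of `k - 1` vertices and disjoint blocks of `r - k + 2` further vertices, and
inside each block form `min ℓ₁ ℓ₂ - 1` hyperedges, each consisting of `A` and the block minus one
vertex. Hyperedges from different blocks meet only in `A`, and no block carries `ℓ₁` or `ℓ₂`
hyperedges. In a Berge copy the `ℓ₁` hyperedges of the path therefore cannot all come from one
block, so two consecutive ones come from different blocks and the path vertex they share lies in
`A`. Likewise each star centre lies in `ℓ₂` hyperedges, two of them from different blocks, so it
lies in `A`. Injectivity of the copy then puts `k` distinct vertices into the `(k - 1)`-set `A`.
-/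

lemma pathG_adj_succ {ℓ i : ℕ} (hi : i < ℓ) :
    (pathG ℓ).Adj (Fin.ofNat (ℓ + 1) i) (Fin.ofNat (ℓ + 1) (i + 1)) := by
  rw [pathG, SimpleGraph.fromRel_adj, ne_eq, Fin.ext_iff, Fin.val_ofNat, Fin.val_ofNat,
    Nat.mod_eq_of_lt (by omega : i < ℓ + 1), Nat.mod_eq_of_lt (by omega : i + 1 < ℓ + 1)]
  omega

lemma starsG_adj_center {c ℓ : ℕ} (j : Fin c) {t : Fin (ℓ + 1)} (ht : t ≠ 0) :
    (starsG c ℓ).Adj (j, 0) (j, t) := by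
  rw [starsG, SimpleGraph.fromRel_adj]
  exact ⟨fun h => ht (Prod.ext_iff.1 h).2.symm, Or.inl ⟨rfl, rfl⟩⟩

/-- The hyperedges of `H` fall into classes `B c` of at most `b` hyperedges each, and
hyperedges from different classes meet only inside the core `A`. -/
structure ClassesMeetInCore {V γ : Type*} (H : Finset (Finset V)) (A : Finset V) (b : ℕ)
    (B : γ → Finset (Finset V)) : Prop where
  exists_mem_class : ∀ e ∈ H, ∃ c, e ∈ B c
  card_class_le : ∀ c, #(B c) ≤ b
  mem_core : ∀ c c', c ≠ c' → ∀ e ∈ B c, ∀ e' ∈ B c', ∀ v ∈ e, v ∈ e' → v ∈ A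

namespace ClassesMeetInCore

variable {α V γ : Type*} {H : Finset (Finset V)} {A : Finset V} {b : ℕ}
  {B : γ → Finset (Finset V)}

lemma map {W : Type*} (hP : ClassesMeetInCore H A b B) (ι : V ↪ W) :
    ClassesMeetInCore (H.map (mapEmbedding ι).toEmbedding) (A.map ι) b
      fun c => (B c).map (mapEmbedding ι).toEmbedding where
  exists_mem_class _ he := by
    obtain ⟨e, he₀, rfl⟩ := mem_map.1 he
    obtain ⟨c, hc⟩ := hP.exists_mem_class e he₀
    exact ⟨c, mem_map_of_mem _ hc⟩
  card_class_le c := (card_map _).trans_le (hP.card_class_le c)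
  mem_core c c' hne _ he _ he' v hv hv' := by
    obtain ⟨e, he₀, rfl⟩ := mem_map.1 he
    obtain ⟨e', he₀', rfl⟩ := mem_map.1 he'
    simp only [RelEmbedding.coe_toEmbedding, mapEmbedding_apply, mem_map] at hv hv' ⊢
    obtain ⟨w, hw, rfl⟩ := hv
    obtain ⟨w', hw', hww⟩ := hv'
    rw [ι.injective hww] at hw'
    exact ⟨w, hP.mem_core c c' hne e he₀ e' he₀' w hw hw', rfl⟩

lemma mem_class_of_mem_of_notMem (hP : ClassesMeetInCore H A b B) {c : γ} {e e' : Finset V}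
    {v : V} (he : e ∈ B c) (he' : e' ∈ H) (hve : v ∈ e) (hve' : v ∈ e') (hvA : v ∉ A) :
    e' ∈ B c := by
  obtain ⟨c', hc'⟩ := hP.exists_mem_class e' he'
  obtain rfl | hne := eq_or_ne c c'
  · exact hc'
  · exact absurd (hP.mem_core c c' hne e he e' hc' v hve hve') hvA

lemma mem_of_forall_mem (hP : ClassesMeetInCore H A b B) {S : Finset (Finset V)} {v : V}
    (hSH : S ⊆ H) (hb : b < #S) (hv : ∀ e ∈ S, v ∈ e) : v ∈ A := by
  by_contra hvA
  obtain ⟨e₀, he₀⟩ := card_pos.1 (by omega : 0 < #S)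
  obtain ⟨c, hc⟩ := hP.exists_mem_class e₀ (hSH he₀)
  have hSB : S ⊆ B c := fun e he =>
    hP.mem_class_of_mem_of_notMem hc (hSH he) (hv e₀ he₀) (hv e he) hvA
  exact absurd ((card_le_card hSB).trans (hP.card_class_le c)) (by omega)

lemma exists_mem_of_chain (hP : ClassesMeetInCore H A b B) {ℓ : ℕ} (g : ℕ → Finset V)
    (x : ℕ → V) (hg : ∀ i < ℓ, g i ∈ H) (hinj : Set.InjOn g (Set.Iio ℓ))
    (hx : ∀ i, i + 1 < ℓ → x (i + 1) ∈ g i ∧ x (i + 1) ∈ g (i + 1)) (hb : b < ℓ) :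
    ∃ i, x i ∈ A := by
  by_contra! hxA
  obtain ⟨c, hc⟩ := hP.exists_mem_class (g 0) (hg 0 (by omega))
  have hall : ∀ i < ℓ, g i ∈ B c := by
    intro i hi
    induction i with
    | zero => exact hc
    | succ i ih =>
      exact hP.mem_class_of_mem_of_notMem (ih (by omega)) (hg _ hi) (hx i hi).1 (hx i hi).2
        (hxA _)
  have hℓ : #(range ℓ) ≤ #(B c) :=
    card_le_card_of_injOn g (fun i hi => hall i (mem_range.1 hi))
      (by simpa only [coe_range] using hinj)
  have := hP.card_class_le c
  rw [card_range] at hℓ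
  omega

variable {F : SimpleGraph α} {f : α → V} {φ : Sym2 α → Finset V}

lemma mem_of_bergeStar (hP : ClassesMeetInCore H A b B) (hφ : Set.InjOn φ F.edgeSet)
    (hmem : ∀ e ∈ F.edgeSet, φ e ∈ H ∧ ∀ x ∈ e, f x ∈ φ e) {x : α} {s : Finset α}
    (hs : ∀ y ∈ s, F.Adj x y) (hb : b < #s) : f x ∈ A := by
  classical
  refine hP.mem_of_forall_mem (S := s.image fun y => φ s(x, y)) ?_ ?_ ?_
  · simp only [subset_iff, mem_image]
    rintro _ ⟨y, hy, rfl⟩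
    exact (hmem _ (hs y hy)).1
  · rwa [card_image_of_injOn fun y hy y' hy' h =>
      Sym2.congr_right.1 (hφ (hs y hy) (hs y' hy') h)]
  · simp only [mem_image]
    rintro _ ⟨y, hy, rfl⟩
    exact (hmem _ (hs y hy)).2 x (Sym2.mem_mk_left x y)

lemma exists_mem_of_bergePath (hP : ClassesMeetInCore H A b B) (hφ : Set.InjOn φ F.edgeSet)
    (hmem : ∀ e ∈ F.edgeSet, φ e ∈ H ∧ ∀ x ∈ e, f x ∈ φ e) {ℓ : ℕ} (p : ℕ → α)
    (hp : Set.InjOn p (Set.Iic ℓ)) (hadj : ∀ i < ℓ, F.Adj (p i) (p (i + 1))) (hb : b < ℓ) :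
    ∃ i, f (p i) ∈ A := by
  have hpi : ∀ {i j}, i ≤ ℓ → j ≤ ℓ → p i = p j → i = j := fun hi hj h => hp hi hj h
  refine hP.exists_mem_of_chain (fun i => φ s(p i, p (i + 1))) (f ∘ p)
    (fun i hi => (hmem _ (hadj i hi)).1) ?_ (fun i hi => ?_) hb
  · intro i hi j hj h
    simp only [Set.mem_Iio] at hi hj
    rcases Sym2.eq_iff.1 (hφ (hadj i hi) (hadj j hj) h) with ⟨h₁, -⟩ | ⟨h₁, h₂⟩
    · exact hpi (by omega) (by omega) h₁
    · have := hpi (by omega) (by omega) h₁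
      have := hpi (by omega) (by omega) h₂
      omega
  · exact ⟨(hmem _ (hadj i (by omega))).2 _ (Sym2.mem_mk_right _ _),
      (hmem _ (hadj (i + 1) hi)).2 _ (Sym2.mem_mk_left _ _)⟩

theorem not_isBergeCopy_pathG_sum_starsG (hP : ClassesMeetInCore H A b B) {c ℓ₁ ℓ₂ : ℕ} (hA : #A ≤ c) (h₁ : b < ℓ₁) (h₂ : b < ℓ₂) :
    ¬ IsBergeCopy ((pathG ℓ₁).sum (starsG c ℓ₂)) H := by
  classical
  rintro ⟨f, φ, hf, hφ, hmem⟩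
  obtain ⟨i, hi⟩ := hP.exists_mem_of_bergePath hφ hmem (ℓ := ℓ₁) (fun i => .inl (Fin.ofNat _ i))
    (fun i hi j hj h => by
      simp only [Set.mem_Iic] at hi hj
      simpa [Fin.ext_iff, Nat.mod_eq_of_lt (Nat.lt_succ_of_le hi),
        Nat.mod_eq_of_lt (Nat.lt_succ_of_le hj)] using h)
    (fun i hi => SimpleGraph.sum_adj_inl.2 (pathG_adj_succ hi)) h₁
  have hcentre (j : Fin c) : f (.inr (j, 0)) ∈ A :=
    hP.mem_of_bergeStar hφ hmem (s := (univ.erase 0).image fun t => .inr (j, t))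
      (by
        simp only [mem_image, mem_erase, mem_univ, and_true]
        rintro _ ⟨t, ht, rfl⟩
        exact SimpleGraph.sum_adj_inr.2 (starsG_adj_center j ht))
      (by
        rw [card_image_of_injective _ fun t t' h => by simpa using h,
          card_erase_of_mem (mem_univ _), card_univ, Fintype.card_fin]
        omega)
  let g : Option (Fin c) → V := fun o => o.elim (f (.inl (Fin.ofNat _ i))) fun j => f (.inr (j, 0))
  have hg : Function.Injective g := by
    rintro (_ | j) (_ | j') h <;> simp_all [g, hf.eq_iff]
  have := card_le_card_of_injOn g (s := univ) (t := A)
    (by rintro (_ | j) - <;> simp only [g, Option.elim, mem_coe, hi, hcentre]) hg.injOn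
  simp only [card_univ, Fintype.card_option, Fintype.card_fin] at this
  omega

end ClassesMeetInCore

section Blocks

variable {α γ κ : Type*} [Fintype α] [Fintype κ] [DecidableEq κ]

/-- On the vertex set `α ⊕ γ × κ`, with core `α` and blocks `{c} × κ`: the hyperedge made of
the core and the block `c` without its vertex `(c, j)`. -/
def blockEdge (c : γ) (j : κ) : Finset (α ⊕ γ × κ) :=
  univ.disjSum ({c} ×ˢ univ.erase j)

lemma card_blockEdge (c : γ) (j : κ) :
    #(blockEdge (α := α) c j) = Fintype.card α + (Fintype.card κ - 1) := by
  rw [blockEdge, card_disjSum, card_product, card_singleton, one_mul,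
    card_erase_of_mem (mem_univ j), card_univ, card_univ]

lemma inr_mem_blockEdge {c c' : γ} {j t : κ} :
    .inr (c', t) ∈ blockEdge (α := α) c j ↔ c' = c ∧ t ≠ j := by
  simp only [blockEdge, inr_mem_disjSum, mem_product, mem_singleton, mem_erase, mem_univ,
    and_true]

lemma blockEdge_inj [Nontrivial κ] {c c' : γ} {j j' : κ} :
    blockEdge (α := α) c j = blockEdge c' j' ↔ c = c' ∧ j = j' := by
  refine ⟨fun h => ?_, fun ⟨hc, hj⟩ => hc ▸ hj ▸ rfl⟩
  obtain ⟨t, ht⟩ := exists_ne j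
  have hc : c = c' := by
    have : .inr (c, t) ∈ blockEdge (α := α) c j := inr_mem_blockEdge.2 ⟨rfl, ht⟩
    rw [h] at this
    exact (inr_mem_blockEdge.1 this).1
  refine ⟨hc, ?_⟩
  subst hc
  by_contra hj
  have : .inr (c, j') ∈ blockEdge (α := α) c j := inr_mem_blockEdge.2 ⟨rfl, Ne.symm hj⟩
  rw [h] at this
  exact (inr_mem_blockEdge.1 this).2 rfl

variable [DecidableEq α] [DecidableEq γ] [Fintype γ]

def blockHypergraph (J : Finset κ) : Finset (Finset (α ⊕ γ × κ)) :=
  (univ ×ˢ J).image fun p => blockEdge p.1 p.2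

lemma card_blockHypergraph [Nontrivial κ] (J : Finset κ) :
    #(blockHypergraph (α := α) (γ := γ) J) = Fintype.card γ * #J := by
  rw [blockHypergraph, card_image_of_injective, card_product, card_univ]
  exact fun p p' h => Prod.ext_iff.2 (blockEdge_inj.1 h)

lemma classesMeetInCore_blockHypergraph (J : Finset κ) :
    ClassesMeetInCore (blockHypergraph (α := α) (γ := γ) J) (univ.map .inl) #J
      fun c => J.image (blockEdge c) where
  exists_mem_class e he := by
    obtain ⟨⟨c, j⟩, hp, rfl⟩ := mem_image.1 he
    exact ⟨c, mem_image_of_mem _ (mem_product.1 hp).2⟩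
  card_class_le c := card_image_le
  mem_core c c' hne e he e' he' v hv hv' := by
    obtain ⟨j, -, rfl⟩ := mem_image.1 he
    obtain ⟨j', -, rfl⟩ := mem_image.1 he'
    rcases v with a | ⟨d, t⟩
    · exact mem_map_of_mem _ (mem_univ a)
    · exact absurd ((inr_mem_blockEdge.1 hv).1.symm.trans (inr_mem_blockEdge.1 hv').1) hne

end Blocks

lemma le_exBerge {α : Type*} {F : SimpleGraph α} {r n : ℕ} {H : Finset (Finset (Fin n))}
    (hH : ∀ e ∈ H, #e = r) (hF : ¬ IsBergeCopy F H) : #H ≤ exBerge r n F :=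
  le_csSup ⟨Fintype.card (Finset (Fin n)), by
    rintro _ ⟨H', -, -, rfl⟩
    exact card_le_univ H'⟩ ⟨H, hH, hF, rfl⟩

lemma exists_not_isBergeCopy_pathG_sum_starsG {c q s t ℓ₁ ℓ₂ n : ℕ} (hn : c + q * s ≤ n)
    (hs : 2 ≤ s) (ht : t ≤ s) (h₁ : t < ℓ₁) (h₂ : t < ℓ₂) :
    ∃ H : Finset (Finset (Fin n)), (∀ e ∈ H, #e = c + (s - 1)) ∧
      ¬ IsBergeCopy ((pathG ℓ₁).sum (starsG c ℓ₂)) H ∧ #H = q * t := by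
  obtain ⟨ι⟩ : Nonempty (Fin c ⊕ Fin q × Fin s ↪ Fin n) :=
    Function.Embedding.nonempty_of_card_le (by simpa using hn)
  obtain ⟨J, -, hJ⟩ := exists_subset_card_eq (s := (univ : Finset (Fin s))) (by simpa using ht)
  have : Nontrivial (Fin s) := Fin.nontrivial_iff_two_le.2 hs
  refine ⟨(blockHypergraph J).map (mapEmbedding ι).toEmbedding, ?_, ?_, ?_⟩
  · intro e he
    obtain ⟨e₀, he₀, rfl⟩ := mem_map.1 he
    obtain ⟨p, -, rfl⟩ := mem_image.1 he₀
    rw [RelEmbedding.coe_toEmbedding, mapEmbedding_apply, card_map, card_blockEdge,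
      Fintype.card_fin, Fintype.card_fin]
  · exact ((classesMeetInCore_blockHypergraph J).map ι).not_isBergeCopy_pathG_sum_starsG
      (by simp) (hJ ▸ h₁) (hJ ▸ h₂)
  · rw [card_map, card_blockHypergraph, hJ, Fintype.card_fin]

theorem ex_berge_path_union_stars_lower (k ℓ₁ ℓ₂ r : ℕ) (hk : 2 ≤ k)
    (h1 : 3 ≤ ℓ₁) (h2 : 2 ≤ ℓ₂) (hr : ℓ₁ + ℓ₂ + k - 1 ≤ r) :
    ∃ N, ∀ n ≥ N,
      (∃ H : Finset (Finset (Fin n)), (∀ e ∈ H, e.card = r) ∧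
        ¬ IsBergeCopy ((pathG ℓ₁).sum (starsG (k - 1) ℓ₂)) H ∧
        H.card = (min ℓ₁ ℓ₂ - 1) * ((n - k + 1) / (r - k + 2))) ∧
      (min ℓ₁ ℓ₂ - 1) * ((n - k + 1) / (r - k + 2)) ≤
        exBerge r n ((pathG ℓ₁).sum (starsG (k - 1) ℓ₂)) := by
  refine ⟨k, fun n hn => ?_⟩
  have hblocks := Nat.div_mul_le_self (n - k + 1) (r - k + 2)
  obtain ⟨H, hunif, hfree, hcard⟩ := exists_not_isBergeCopy_pathG_sum_starsG
    (c := k - 1) (q := (n - k + 1) / (r - k + 2)) (s := r - k + 2) (t := min ℓ₁ ℓ₂ - 1)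
    (ℓ₁ := ℓ₁) (ℓ₂ := ℓ₂) (n := n) (by omega) (by omega) (by omega) (by omega) (by omega)
  have hunif' : ∀ e ∈ H, #e = r := fun e he => (hunif e he).trans (by omega)
  rw [mul_comm] at hcard
  exact ⟨⟨H, hunif', hfree, hcard⟩, hcard ▸ le_exBerge hunif' hfree⟩
end

section
/- Let ℓ ≥ 2 and r > k ≥ 2 be integers with ℓ ≤ r + 1. For sufficiently large n, the maximum number of hyperedges in an n-vertex r-uniform hypergraph containing no Berge copy of S_ℓ ∪ M_{k-1} equals ⌊n(ℓ-1)/r⌋. -/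
open Finset

/-!
Lower bound: for `d = ℓ - 1`, the cyclic intervals of length `r` in `ℤ/n` starting at
`⌊j r / d⌋`, `j < ⌊n d / r⌋`, are distinct and cover every vertex at most `d` times, so no vertex
can be the centre of a Berge star with `ℓ` edges.

Upper bound: with more than `n d / r` hyperedges some vertex `v` has degree at least `ℓ`, and for
large `n` the Erdős–Rado sunflower lemma yields `ℓ + k` hyperedges forming a sunflower. If its
kernel is empty they are pairwise disjoint: a Berge star at `v`, whose leaves exist by Hall's
theorem because `ℓ ≤ r + 1`, meets at most `ℓ + 1` of them, and `k - 1` of the others form the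
matching. Otherwise a kernel vertex is the centre of a star with leaves in `ℓ` petals, and each of
`k - 1` further petal hyperedges gives a matching edge made of a petal vertex and a second vertex
chosen among the `r - 2 ≥ k - 1` remaining ones.
-/

namespace Finset

variable {ι α : Type*}

theorem exists_injective_mem_of_card_le [DecidableEq α] [Fintype ι] {t : ι → Finset α}
    (ht : ∀ i, Fintype.card ι ≤ #(t i)) : ∃ f : ι → α, Function.Injective f ∧ ∀ i, f i ∈ t i := by
  refine (all_card_le_biUnion_card_iff_exists_injective t).mp fun s => ?_
  obtain rfl | ⟨i, hi⟩ := s.eq_empty_or_nonempty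
  · simp
  calc #s ≤ Fintype.card ι := card_le_univ s
    _ ≤ #(t i) := ht i
    _ ≤ #(s.biUnion t) := card_le_card (subset_biUnion_of_mem t hi)

theorem exists_injective_mem_of_injective_of_card_eq [DecidableEq α] [Fintype ι]
    {t : ι → Finset α} {m : ℕ}
    (ht : Function.Injective t) (hcard : ∀ i, #(t i) = m) (hm : 0 < m)
    (hι : Fintype.card ι ≤ m + 2) : ∃ f : ι → α, Function.Injective f ∧ ∀ i, f i ∈ t i := by
  refine (all_card_le_biUnion_card_iff_exists_injective t).mp fun s => ?_
  obtain rfl | ⟨i, hi⟩ := s.eq_empty_or_nonempty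
  · simp
  set U := s.biUnion t
  have hU : m ≤ #U := hcard i ▸ card_le_card (subset_biUnion_of_mem t hi)
  have hsU : #s ≤ (#U).choose m := by
    rw [← card_powersetCard]
    exact card_le_card_of_injOn t (fun j hj => mem_powersetCard.mpr
      ⟨subset_biUnion_of_mem t hj, hcard j⟩) ht.injOn
  have hs : #s ≤ m + 2 := (card_le_univ s).trans hι
  obtain hUm | hUm | hUm : #U = m ∨ #U = m + 1 ∨ m + 2 ≤ #U := by omega
  · rw [hUm, Nat.choose_self] at hsU; omega
  · rw [hUm, Nat.choose_succ_self_right] at hsU; omega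
  · omega

theorem card_le_of_forall_lt_add {s : Finset ℕ} {d : ℕ}
    (hs : ∀ x ∈ s, ∀ y ∈ s, x ≤ y → y < x + d) : #s ≤ d := by
  obtain rfl | hne := s.eq_empty_or_nonempty
  · simp
  calc #s ≤ #(Ico (s.min' hne) (s.min' hne + d)) := card_le_card fun y hy =>
        mem_Ico.mpr ⟨s.min'_le y hy, hs _ (s.min'_mem hne) y hy (s.min'_le y hy)⟩
    _ = d := by simp

theorem exists_maximal_pairwiseDisjoint [DecidableEq ι] (L : Finset ι)
    (p : ι → Finset α) : ∃ M ⊆ L, (M : Set ι).PairwiseDisjoint p ∧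
      ∀ e ∈ L, e ∉ M → ∃ e' ∈ M, ¬ Disjoint (p e) (p e') := by
  classical
  set P := L.powerset.filter fun M : Finset ι => (M : Set ι).PairwiseDisjoint p
  obtain ⟨M, hM, hmax⟩ := exists_max_image P card ⟨∅, by simp [P]⟩
  obtain ⟨hML, hMdisj⟩ := mem_filter.mp hM
  refine ⟨M, mem_powerset.mp hML, hMdisj, fun e he heM => ?_⟩
  by_contra! hdisj
  have hins : insert e M ∈ P := by
    refine mem_filter.mpr ⟨mem_powerset.mpr (insert_subset he (mem_powerset.mp hML)), ?_⟩
    rw [coe_insert, Set.pairwiseDisjoint_insert]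
    exact ⟨hMdisj, fun e' he' _ => hdisj e' he'⟩
  have := hmax _ hins
  rw [card_insert_of_notMem heM] at this
  omega

end Finset

theorem exists_sunflower {V : Type*} [DecidableEq V] (w j : ℕ) (C : Finset V)
    (L : Finset (Finset V)) (hL : ∀ e ∈ L, C ⊆ e ∧ #(e \ C) = j) (hbig : w ^ j * j.factorial < #L) :
    ∃ K : Finset V, ∃ S ⊆ L, w ≤ #S ∧
      (∀ e ∈ S, K ⊆ e ∧ (e \ K).Nonempty) ∧ (S : Set (Finset V)).PairwiseDisjoint (· \ K) := by
  induction j generalizing C L with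
  | zero =>
    have : L ⊆ {C} := fun e he => mem_singleton.mpr
      (subset_antisymm (sdiff_eq_empty_iff_subset.mp (card_eq_zero.mp (hL e he).2)) (hL e he).1)
    have := card_le_card this
    simp only [pow_zero, Nat.factorial_zero, mul_one, card_singleton] at hbig this
    omega
  | succ j ih =>
    obtain ⟨M, hML, hMdisj, hMmax⟩ := exists_maximal_pairwiseDisjoint L (· \ C)
    by_cases hM : w ≤ #M
    · refine ⟨C, M, hML, hM, fun e he => ⟨(hL e (hML he)).1, ?_⟩, hMdisj⟩
      rw [← card_pos, (hL e (hML he)).2]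
      omega
    set U := M.biUnion (· \ C)
    have hU : #U ≤ w * (j + 1) := calc
      #U ≤ ∑ e ∈ M, #(e \ C) := card_biUnion_le
      _ = #M * (j + 1) := by rw [sum_const_nat fun e he => (hL e (hML he)).2]
      _ ≤ w * (j + 1) := by gcongr; omega
    -- by maximality of `M`, every petal meets `U`
    have hcover : L ⊆ U.biUnion fun u => {e ∈ L | u ∈ e \ C} := by
      intro e he
      obtain ⟨u, hu⟩ : ∃ u ∈ U, u ∈ e \ C := by
        by_cases heM : e ∈ M
        · obtain ⟨u, hu⟩ := card_pos.mp (by rw [(hL e he).2]; omega : 0 < #(e \ C))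
          exact ⟨u, mem_biUnion.mpr ⟨e, heM, hu⟩, hu⟩
        · obtain ⟨e', he', hnd⟩ := hMmax e he heM
          obtain ⟨u, hu, hu'⟩ := not_disjoint_iff.mp hnd
          exact ⟨u, mem_biUnion.mpr ⟨e', he', hu'⟩, hu⟩
      exact mem_biUnion.mpr ⟨u, hu.1, mem_filter.mpr ⟨he, hu.2⟩⟩
    obtain ⟨u, -, hu⟩ : ∃ u ∈ U, w ^ j * j.factorial < #{e ∈ L | u ∈ e \ C} := by
      refine exists_lt_of_sum_lt ?_
      calc ∑ _u ∈ U, w ^ j * j.factorial = #U * (w ^ j * j.factorial) :=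
            sum_const_nat fun _ _ => rfl
        _ ≤ w * (j + 1) * (w ^ j * j.factorial) := by gcongr
        _ = w ^ (j + 1) * (j + 1).factorial := by rw [Nat.factorial_succ, pow_succ]; ring
        _ < #L := hbig
        _ ≤ ∑ u ∈ U, #{e ∈ L | u ∈ e \ C} := (card_le_card hcover).trans card_biUnion_le
    obtain ⟨K, S, hS, rest⟩ := ih (insert u C) {e ∈ L | u ∈ e \ C} (fun e he => by
      obtain ⟨he, hue⟩ := mem_filter.mp he
      refine ⟨insert_subset (mem_sdiff.mp hue).1 (hL e he).1, ?_⟩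
      rw [sdiff_insert, card_erase_of_mem hue, (hL e he).2]
      rfl) hu
    exact ⟨K, S, hS.trans (filter_subset _ _), rest⟩

theorem exists_eq_of_mem_edgeSet_starsG {ℓ : ℕ} {e : Sym2 (Fin 1 × Fin (ℓ + 1))}
    (he : e ∈ (starsG 1 ℓ).edgeSet) :
    ∃ i : Fin ℓ, e = s((0, 0), (0, i.succ)) := by
  induction e with
  | h x y =>
    obtain ⟨a, i⟩ := x
    obtain ⟨b, j⟩ := y
    obtain rfl := Subsingleton.elim a 0
    obtain rfl := Subsingleton.elim b 0
    simp only [starsG, SimpleGraph.mem_edgeSet, SimpleGraph.fromRel_adj] at he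
    obtain ⟨hne, ⟨-, rfl⟩ | ⟨-, rfl⟩⟩ := he
    · obtain ⟨j, rfl⟩ := (Fin.exists_succ_eq (x := j)).mpr fun h => hne (by rw [h])
      exact ⟨j, rfl⟩
    · obtain ⟨i, rfl⟩ := (Fin.exists_succ_eq (x := i)).mpr fun h => hne (by rw [h])
      exact ⟨i, Sym2.eq_swap⟩

theorem exists_eq_of_mem_edgeSet_matchingG {t : ℕ} {e : Sym2 (Fin t × Fin 2)}
    (he : e ∈ (matchingG t).edgeSet) :
    ∃ j : Fin t, e = s((j, 0), (j, 1)) := by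
  induction e with
  | h x y =>
    obtain ⟨a, i⟩ := x
    obtain ⟨b, j⟩ := y
    simp only [matchingG, SimpleGraph.mem_edgeSet, SimpleGraph.fromRel_adj] at he
    obtain ⟨hne, h | h⟩ := he <;> refine ⟨a, ?_⟩ <;> fin_cases i <;> fin_cases j <;>
      simp_all [Sym2.eq_swap]

section
variable {α β V : Type*}

theorem exists_eq_map_of_mem_edgeSet_sum {G : SimpleGraph α} {F : SimpleGraph β}
    {e : Sym2 (α ⊕ β)} (he : e ∈ (G ⊕g F).edgeSet) :
    (∃ e₁ ∈ G.edgeSet, e = e₁.map Sum.inl) ∨ ∃ e₂ ∈ F.edgeSet, e = e₂.map Sum.inr := by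
  induction e with
  | h x y =>
    rcases x with a | a <;> rcases y with b | b
    · exact .inl ⟨s(a, b), he, rfl⟩
    · simp at he
    · simp at he
    · exact .inr ⟨s(a, b), he, rfl⟩

theorem IsBergeCopy.of_embedding {G : SimpleGraph α} {F : SimpleGraph β}
    {H : Finset (Finset V)} (h : IsBergeCopy F H) (ι : G ↪g F) : IsBergeCopy G H := by
  obtain ⟨f, φ, hf, hφ, hmem⟩ := h
  refine ⟨f ∘ ι, φ ∘ Sym2.map ι, hf.comp ι.injective, ?_, fun e he => ?_⟩
  · exact fun e he e' he' h => Sym2.map.injective ι.injective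
      (hφ (ι.toHom.map_mem_edgeSet he) (ι.toHom.map_mem_edgeSet he') h)
  · obtain ⟨hH, hf⟩ := hmem _ (ι.toHom.map_mem_edgeSet he)
    exact ⟨hH, fun x hx => hf _ (Sym2.mem_map.mpr ⟨x, hx, rfl⟩)⟩

theorem IsBergeCopy.exists_le_card_filter_mem [DecidableEq V] {ℓ : ℕ} {H : Finset (Finset V)}
    (h : IsBergeCopy (starsG 1 ℓ) H) : ∃ v, ℓ ≤ #{e ∈ H | v ∈ e} := by
  obtain ⟨f, φ, -, hφ, hmem⟩ := h
  have hedge (i : Fin ℓ) :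
      s(((0 : Fin 1), (0 : Fin (ℓ + 1))), (0, i.succ)) ∈ (starsG 1 ℓ).edgeSet := by
    simp [starsG, (Fin.succ_ne_zero i).symm]
  refine ⟨f (0, 0), ?_⟩
  calc ℓ = #(univ : Finset (Fin ℓ)) := by simp
    _ ≤ #{e ∈ H | f (0, 0) ∈ e} := by
      refine card_le_card_of_injOn (fun i => φ s((0, 0), (0, i.succ))) (fun i _ => ?_) ?_
      · exact mem_filter.mpr ⟨(hmem _ (hedge i)).1, (hmem _ (hedge i)).2 _ (Sym2.mem_mk_left _ _)⟩
      · intro i _ i' _ hii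
        simpa using hφ (hedge i) (hedge i') hii

def IsBergeCopyWith (F : SimpleGraph α) (H : Finset (Finset V)) (f : α → V) : Prop :=
  ∃ φ : Sym2 α → Finset V, Set.InjOn φ F.edgeSet ∧ ∀ e ∈ F.edgeSet, φ e ∈ H ∧ ∀ x ∈ e, f x ∈ φ e

theorem IsBergeCopyWith.isBergeCopy {F : SimpleGraph α} {H : Finset (Finset V)} {f : α → V}
    (h : IsBergeCopyWith F H f) (hf : Function.Injective f) : IsBergeCopy F H :=
  let ⟨φ, hφ⟩ := h; ⟨f, φ, hf, hφ⟩

theorem IsBergeCopyWith.mono {F : SimpleGraph α} {H H' : Finset (Finset V)} {f : α → V}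
    (h : IsBergeCopyWith F H f) (hH : H ⊆ H') : IsBergeCopyWith F H' f :=
  let ⟨φ, hφ, hmem⟩ := h; ⟨φ, hφ, fun e he => ⟨hH (hmem e he).1, (hmem e he).2⟩⟩

theorem IsBergeCopyWith.sum [DecidableEq V] {G : SimpleGraph α} {F : SimpleGraph β}
    {H₁ H₂ : Finset (Finset V)} {f₁ : α → V} {f₂ : β → V}
    (h₁ : IsBergeCopyWith G H₁ f₁) (h₂ : IsBergeCopyWith F H₂ f₂) (hH : Disjoint H₁ H₂) :
    IsBergeCopyWith (G ⊕g F) (H₁ ∪ H₂) (Sum.elim f₁ f₂) := by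
  obtain ⟨φ₁, hφ₁, hmem₁⟩ := h₁
  obtain ⟨φ₂, hφ₂, hmem₂⟩ := h₂
  let φ : Sym2 (α ⊕ β) → Finset V := Sym2.lift ⟨fun x y =>
    Sum.elim (fun a => Sum.elim (fun b => φ₁ s(a, b)) (fun _ => ∅) y)
      (fun a => Sum.elim (fun _ => ∅) (fun b => φ₂ s(a, b)) y) x,
    by rintro (a | a) (b | b) <;> simp [Sym2.eq_swap]⟩
  have hφl (e : Sym2 α) : φ (e.map Sum.inl) = φ₁ e := by induction e; rfl
  have hφr (e : Sym2 β) : φ (e.map Sum.inr) = φ₂ e := by induction e; rfl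
  have hne {e₁ e₂} (he₁ : e₁ ∈ G.edgeSet) (he₂ : e₂ ∈ F.edgeSet) : φ₁ e₁ ≠ φ₂ e₂ :=
    fun h => disjoint_left.mp hH (hmem₁ e₁ he₁).1 (h ▸ (hmem₂ e₂ he₂).1)
  refine ⟨φ, fun e he e' he' h => ?_, fun e he => ?_⟩
  · rcases exists_eq_map_of_mem_edgeSet_sum he with ⟨e₁, he₁, rfl⟩ | ⟨e₂, he₂, rfl⟩ <;>
      rcases exists_eq_map_of_mem_edgeSet_sum he' with ⟨e₁', he₁', rfl⟩ | ⟨e₂', he₂', rfl⟩ <;>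
      simp only [hφl, hφr] at h
    · rw [hφ₁ he₁ he₁' h]
    · exact absurd h (hne he₁ he₂')
    · exact absurd h.symm (hne he₁' he₂)
    · rw [hφ₂ he₂ he₂' h]
  · rcases exists_eq_map_of_mem_edgeSet_sum he with ⟨e₁, he₁, rfl⟩ | ⟨e₂, he₂, rfl⟩
    · refine ⟨mem_union_left _ (hφl e₁ ▸ (hmem₁ e₁ he₁).1), fun x hx => ?_⟩
      obtain ⟨a, ha, rfl⟩ := Sym2.mem_map.mp hx
      exact hφl e₁ ▸ (hmem₁ e₁ he₁).2 a ha
    · refine ⟨mem_union_right _ (hφr e₂ ▸ (hmem₂ e₂ he₂).1), fun x hx => ?_⟩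
      obtain ⟨b, hb, rfl⟩ := Sym2.mem_map.mp hx
      exact hφr e₂ ▸ (hmem₂ e₂ he₂).2 b hb

end

section
variable {V : Type*} [DecidableEq V] {H : Finset (Finset V)} {r : ℕ}

theorem isBergeCopyWith_starsG {ℓ : ℕ} (f : Fin (ℓ + 1) → V) {se : Fin ℓ → Finset V}
    (hse : Function.Injective se) (hcenter : ∀ i, f 0 ∈ se i) (hleaf : ∀ i, f i.succ ∈ se i) :
    IsBergeCopyWith (starsG 1 ℓ) (univ.image se) (fun x => f x.2) := by
  let edgeAt : Fin (ℓ + 1) → Finset V := Fin.cons ∅ se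
  let φ : Sym2 (Fin 1 × Fin (ℓ + 1)) → Finset V :=
    Sym2.lift ⟨fun x y => edgeAt x.2 ∪ edgeAt y.2, fun _ _ => union_comm _ _⟩
  have hφ (i : Fin ℓ) : φ s((0, 0), (0, i.succ)) = se i := by simp [φ, edgeAt]
  refine ⟨φ, fun e he e' he' h => ?_, fun e he => ?_⟩
  · obtain ⟨i, rfl⟩ := exists_eq_of_mem_edgeSet_starsG he
    obtain ⟨i', rfl⟩ := exists_eq_of_mem_edgeSet_starsG he'
    rw [hφ, hφ] at h
    rw [hse h]
  · obtain ⟨i, rfl⟩ := exists_eq_of_mem_edgeSet_starsG he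
    refine ⟨hφ i ▸ mem_image_of_mem se (mem_univ i), fun x hx => ?_⟩
    rcases Sym2.mem_iff.mp hx with rfl | rfl
    · exact hφ i ▸ hcenter i
    · exact hφ i ▸ hleaf i

theorem isBergeCopyWith_matchingG {t : ℕ} {g : Fin t × Fin 2 → V} {me : Fin t → Finset V}
    (hme : Function.Injective me) (hg : ∀ x, g x ∈ me x.1) :
    IsBergeCopyWith (matchingG t) (univ.image me) g := by
  let φ : Sym2 (Fin t × Fin 2) → Finset V :=
    Sym2.lift ⟨fun x y => me x.1 ∪ me y.1, fun _ _ => union_comm _ _⟩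
  have hφ (j : Fin t) : φ s((j, 0), (j, 1)) = me j := by simp [φ]
  refine ⟨φ, fun e he e' he' h => ?_, fun e he => ?_⟩
  · obtain ⟨j, rfl⟩ := exists_eq_of_mem_edgeSet_matchingG he
    obtain ⟨j', rfl⟩ := exists_eq_of_mem_edgeSet_matchingG he'
    rw [hφ, hφ] at h
    rw [hme h]
  · obtain ⟨j, rfl⟩ := exists_eq_of_mem_edgeSet_matchingG he
    refine ⟨hφ j ▸ mem_image_of_mem me (mem_univ j), fun x hx => ?_⟩
    rcases Sym2.mem_iff.mp hx with rfl | rfl <;> exact hφ j ▸ hg _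

theorem isBergeCopy_starsG_sum_matchingG {ℓ t : ℕ}
    {f : Fin (ℓ + 1) → V} {g : Fin t × Fin 2 → V} {se : Fin ℓ → Finset V} {me : Fin t → Finset V}
    (hfg : Function.Injective (Sum.elim f g)) (hsm : Function.Injective (Sum.elim se me))
    (hseH : ∀ i, se i ∈ H) (hmeH : ∀ j, me j ∈ H)
    (hcenter : ∀ i, f 0 ∈ se i) (hleaf : ∀ i, f i.succ ∈ se i) (hg : ∀ x, g x ∈ me x.1) :
    IsBergeCopy ((starsG 1 ℓ) ⊕g (matchingG t)) H := by
  have hse : Function.Injective se := hsm.comp Sum.inl_injective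
  have hme : Function.Injective me := hsm.comp Sum.inr_injective
  have hdisj : Disjoint (univ.image se) (univ.image me) := by
    simpa [disjoint_left] using fun i j h =>
      Sum.inl_ne_inr (hsm (a₁ := .inl i) (a₂ := .inr j) h.symm)
  refine (((isBergeCopyWith_starsG f hse hcenter hleaf).sum
    (isBergeCopyWith_matchingG hme hg) hdisj).mono ?_).isBergeCopy ?_
  · simpa [union_subset_iff, image_subset_iff] using ⟨hseH, hmeH⟩
  · have hsnd : Function.Injective (Prod.snd : Fin 1 × Fin (ℓ + 1) → Fin (ℓ + 1)) :=
      fun x y h => Prod.ext (Subsingleton.elim _ _) h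
    convert hfg.comp (hsnd.sumMap Function.injective_id) using 1
    ext (x | x) <;> rfl

theorem exists_star_of_le_card_filter_mem (hH : ∀ e ∈ H, #e = r) (hr : 2 ≤ r) {ℓ : ℕ}
    (hℓ : ℓ ≤ r + 1) {v : V} (hv : ℓ ≤ #{e ∈ H | v ∈ e}) :
    ∃ (f : Fin (ℓ + 1) → V) (se : Fin ℓ → Finset V),
      f 0 = v ∧ Function.Injective f ∧ Function.Injective se ∧ (∀ i, se i ∈ H) ∧
        (∀ i, v ∈ se i) ∧ ∀ i, f i.succ ∈ se i := by
  obtain ⟨se, hse, hseH⟩ :=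
    exists_injective_mem_of_card_le (t := fun _ : Fin ℓ => {e ∈ H | v ∈ e})
      fun _ => by simpa using hv
  simp only [mem_filter] at hseH
  -- Hall's condition holds because at most `r + 1` distinct `(r - 1)`-sets are involved
  obtain ⟨leaf, hleaf, hleafmem⟩ := exists_injective_mem_of_injective_of_card_eq
    (t := fun i => (se i).erase v) (m := r - 1)
    (fun i i' h => hse ((erase_injOn' v) (hseH i).2 (hseH i').2 h))
    (fun i => by rw [card_erase_of_mem (hseH i).2, hH _ (hseH i).1]) (by omega) (by simp; omega)
  refine ⟨Fin.cons v leaf, se, rfl, Fin.cons_injective_of_injective ?_ hleaf, hse,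
    fun i => (hseH i).1, fun i => (hseH i).2, fun i => mem_of_mem_erase (hleafmem i)⟩
  rintro ⟨i, hi⟩
  exact ne_of_mem_erase (hleafmem i) hi

theorem isBergeCopy_of_pairwiseDisjoint (hH : ∀ e ∈ H, #e = r) (hr : 2 ≤ r) {ℓ t : ℕ}
    (hℓ : ℓ ≤ r + 1) {S : Finset (Finset V)} (hSH : S ⊆ H) (hS : ℓ + t + 1 ≤ #S)
    (hdisj : (S : Set (Finset V)).PairwiseDisjoint id) {v : V} (hv : ℓ ≤ #{e ∈ H | v ∈ e}) :
    IsBergeCopy ((starsG 1 ℓ) ⊕g (matchingG t)) H := by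
  obtain ⟨f, se, rfl, hf, hse, hseH, hcenter, hleaf⟩ :=
    exists_star_of_le_card_filter_mem hH hr hℓ hv
  set X := univ.image f
  have hbad : #{e ∈ S | ¬Disjoint e X} ≤ ℓ + 1 := calc
    _ ≤ #({e ∈ S | ¬Disjoint e X}.biUnion (· ∩ X)) := card_le_card_biUnion
        (fun e he e' he' hne => (hdisj (filter_subset _ _ he) (filter_subset _ _ he') hne).mono
          inter_subset_left inter_subset_left)
        (fun e he => not_disjoint_iff_nonempty_inter.mp (mem_filter.mp he).2)
    _ ≤ #X := card_le_card (biUnion_subset.mpr fun _ _ => inter_subset_right)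
    _ ≤ ℓ + 1 := card_image_le.trans (by simp)
  have hgood : t ≤ #{e ∈ S | Disjoint e X} := by
    have := card_filter_add_card_filter_not (s := S) (fun e => Disjoint e X)
    omega
  obtain ⟨me, hme, hmeS⟩ := exists_injective_mem_of_card_le
    (t := fun _ : Fin t => {e ∈ S | Disjoint e X}) fun _ => by simpa using hgood
  simp only [mem_filter] at hmeS
  have hmeX (j : Fin t) {x : V} (hx : x ∈ me j) : x ∉ X := disjoint_left.mp (hmeS j).2 hx
  choose p hp hpme using fun j => exists_injective_mem_of_card_le (t := fun _ : Fin 2 => me j)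
    (by simp [hH _ (hSH (hmeS j).1), hr])
  have hg : Function.Injective fun x : Fin t × Fin 2 => p x.1 x.2 := by
    rintro ⟨j, i⟩ ⟨j', i'⟩ (h : p j i = p j' i')
    obtain rfl : j = j' := hme (hdisj.elim_finset (hmeS j).1 (hmeS j').1 _ (hpme j i)
      (h ▸ hpme j' i'))
    rw [hp j h]
  refine isBergeCopy_starsG_sum_matchingG (g := fun x => p x.1 x.2)
    (hf.sumElim hg fun i x h => hmeX x.1 (hpme x.1 x.2) (h ▸ mem_image_of_mem f (mem_univ i)))
    (hse.sumElim hme fun i j h => hmeX j (h ▸ hcenter i) (mem_image_of_mem f (mem_univ 0)))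
    hseH (fun j => hSH (hmeS j).1) hcenter hleaf fun x => hpme x.1 x.2

theorem isBergeCopy_of_sunflower (hH : ∀ e ∈ H, #e = r) {ℓ t : ℕ} (ht : t + 2 ≤ r)
    {K : Finset V} {S : Finset (Finset V)} (hSH : S ⊆ H) (hS : ℓ + t ≤ #S)
    (hK : ∀ e ∈ S, K ⊆ e ∧ (e \ K).Nonempty)
    (hdisj : (S : Set (Finset V)).PairwiseDisjoint (· \ K))
    {u : V} (hu : u ∈ K) : IsBergeCopy ((starsG 1 ℓ) ⊕g (matchingG t)) H := by
  obtain ⟨es, hes, hesS⟩ := exists_injective_mem_of_card_le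
    (t := fun _ : Fin ℓ ⊕ Fin t => S) fun _ => by simpa using hS
  have hpetal {x y} (hxy : x ≠ y) {a : V} (ha : a ∈ es x \ K) : a ∉ es y := fun hay =>
    hxy (hes (hdisj.elim_finset (hesS x) (hesS y) a ha (mem_sdiff.mpr ⟨hay, (mem_sdiff.mp ha).2⟩)))
  choose p hp using fun x => (hK (es x) (hesS x)).2
  have hpK (x) : p x ∉ K := (mem_sdiff.mp (hp x)).2
  have hpinj : Function.Injective p := fun x y h => by
    by_contra hxy
    exact hpetal hxy (hp x) (h ▸ (mem_sdiff.mp (hp y)).1)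
  obtain ⟨b, hb, hbmem⟩ := exists_injective_mem_of_card_le
    (t := fun j : Fin t => es (.inr j) \ {p (.inr j), u}) fun j => by
      have hsdiff := le_card_sdiff {p (.inr j), u} (es (.inr j))
      rw [hH _ (hSH (hesS _))] at hsdiff
      have := card_le_two (a := p (.inr j)) (b := u)
      rw [Fintype.card_fin]
      omega
  simp only [mem_sdiff, mem_insert, mem_singleton, not_or] at hbmem
  have hpb (x j) : p x ≠ b j := by
    intro h
    obtain rfl | hxj := eq_or_ne x (.inr j)
    · exact (hbmem j).2.1 h.symm
    · exact hpetal hxj (hp x) (h ▸ (hbmem j).1)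
  let g : Fin t × Fin 2 → V := fun x => ![p (.inr x.1), b x.1] x.2
  have hg : Function.Injective g := by
    rintro ⟨j, i⟩ ⟨j', i'⟩ h
    fin_cases i <;> fin_cases i' <;>
      simp only [g, Fin.zero_eta, Fin.mk_one, Matrix.cons_val_zero, Matrix.cons_val_one,
        Matrix.cons_val_fin_one, Prod.mk.injEq, and_true, and_false, zero_ne_one, one_ne_zero] at h ⊢
    · exact Sum.inr_injective (hpinj h)
    · exact hpb _ _ h
    · exact hpb _ _ h.symm
    · exact hb h
  have hfg : Function.Injective (Sum.elim (Fin.cons u (p ∘ .inl)) g) := by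
    refine (Fin.cons_injective_of_injective ?_ (hpinj.comp Sum.inl_injective)).sumElim hg ?_
    · rintro ⟨i, hi⟩; exact hpK _ (hi ▸ hu)
    · intro i ⟨j, k⟩
      cases i using Fin.cases <;> fin_cases k <;>
        simp only [g, Fin.cons_zero, Fin.cons_succ, Function.comp_apply, Fin.zero_eta, Fin.mk_one,
          Matrix.cons_val_zero, Matrix.cons_val_one, Matrix.cons_val_fin_one, ne_eq]
      · exact fun h => hpK _ (h ▸ hu)
      · exact (hbmem j).2.2 ∘ Eq.symm
      · exact fun h => Sum.inl_ne_inr (hpinj h)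
      · exact hpb _ _
  refine isBergeCopy_starsG_sum_matchingG (se := es ∘ .inl) (me := es ∘ .inr) hfg
    (by rwa [Sum.elim_comp_inl_inr])
    (fun i => hSH (hesS _)) (fun j => hSH (hesS _)) (fun i => (hK _ (hesS _)).1 hu)
    (fun i => (mem_sdiff.mp (hp _)).1) ?_
  rintro ⟨j, k⟩
  fin_cases k
  · exact (mem_sdiff.mp (hp _)).1
  · exact (hbmem j).1

theorem isBergeCopy_of_card_lt (hH : ∀ e ∈ H, #e = r) {ℓ t : ℕ} (hℓ : ℓ ≤ r + 1)
    (ht : t + 2 ≤ r) (hbig : (ℓ + t + 1) ^ r * r.factorial < #H) {v : V}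
    (hv : ℓ ≤ #{e ∈ H | v ∈ e}) : IsBergeCopy ((starsG 1 ℓ) ⊕g (matchingG t)) H := by
  obtain ⟨K, S, hSH, hS, hK, hdisj⟩ :=
    exists_sunflower (ℓ + t + 1) r ∅ H (fun e he => by simp [hH e he]) hbig
  obtain rfl | ⟨u, hu⟩ := K.eq_empty_or_nonempty
  · exact isBergeCopy_of_pairwiseDisjoint hH (by omega) hℓ hSH hS
      (fun e he e' he' hne => by simpa [Function.onFun] using hdisj he he' hne) hv
  · exact isBergeCopy_of_sunflower hH ht hSH (by omega) hK hdisj hu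

end

theorem card_filter_range_le_of_add_le {b : ℕ → ℕ} {n r d m : ℕ} (hrn : r ≤ n)
    (hstep : ∀ z z', z + d ≤ z' → b z + r ≤ b z') (hwrap : ∀ z, b (z + m) ≤ b z + n)
    (hbn : ∀ j < m, b j < n) (v : ℕ) :
    #{j ∈ range m | b j ≤ v ∧ v < b j + r ∨ v + n < b j + r} ≤ d := by
  set J := {j ∈ range m | b j ≤ v ∧ v < b j + r ∨ v + n < b j + r}
  -- unroll the cycle once: the indices whose interval wraps around stay put, the others move up
  -- by `m`; then all of them lie in a window of fewer than `d` consecutive indices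
  let ψ : ℕ → ℕ := fun j => if b j ≤ v then j + m else j
  have hJ {j} (hj : j ∈ J) : j < m ∧ (b j ≤ v ∧ v < b j + r ∨ v + n < b j + r) := by
    simpa [J] using hj
  have hψ : Set.InjOn ψ J := fun j hj j' hj' h => by
    have := (hJ hj).1; have := (hJ hj').1
    simp only [ψ] at h
    split_ifs at h <;> omega
  rw [← card_image_of_injOn hψ]
  refine card_le_of_forall_lt_add ?_
  simp only [mem_image]
  rintro _ ⟨j, hj, rfl⟩ _ ⟨j', hj', rfl⟩ hle
  by_contra! hlt
  obtain ⟨hjm, hj⟩ := hJ hj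
  obtain ⟨hjm', hj'⟩ := hJ hj'
  have := hbn j hjm; have := hbn j' hjm'; have := hwrap j'
  simp only [ψ] at hle hlt
  split_ifs at hle hlt <;>
    first | have := hstep _ _ hlt; omega | have := hstep j j' (by omega); omega

section CyclicConstruction

variable (n : ℕ) [NeZero n]

def cyclicInterval (a r : ℕ) : Finset (Fin n) := (range r).image fun s => Fin.ofNat n (a + s)

variable {n}

theorem mem_cyclicInterval {a r : ℕ} (ha : a < n) (hr : r ≤ n) {v : Fin n} :
    v ∈ cyclicInterval n a r ↔ a ≤ v ∧ (v : ℕ) < a + r ∨ (v : ℕ) + n < a + r := by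
  simp only [cyclicInterval, mem_image, mem_range, Fin.ext_iff, Fin.val_ofNat]
  have hv := v.isLt
  constructor
  · rintro ⟨s, hs, hsv⟩
    rcases lt_or_ge (a + s) n with h | h
    · rw [Nat.mod_eq_of_lt h] at hsv; omega
    · rw [Nat.mod_eq_sub_mod h, Nat.mod_eq_of_lt (by omega)] at hsv; omega
  · rintro (⟨h₁, h₂⟩ | h)
    · exact ⟨v - a, by omega, by rw [Nat.add_sub_cancel' h₁, Nat.mod_eq_of_lt hv]⟩
    · refine ⟨v + n - a, by omega, ?_⟩
      rw [Nat.add_sub_cancel' (by omega), Nat.add_mod_right, Nat.mod_eq_of_lt hv]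

theorem card_cyclicInterval {a r : ℕ} (hr : r ≤ n) : #(cyclicInterval n a r) = r := by
  rw [cyclicInterval, card_image_of_injOn, card_range]
  intro s hs s' hs' h
  simp only [coe_range, Set.mem_Iio, Fin.ext_iff, Fin.val_ofNat] at hs hs' h
  have := Nat.ModEq.add_left_cancel' a h
  rwa [Nat.ModEq, Nat.mod_eq_of_lt (by omega), Nat.mod_eq_of_lt (by omega)] at this

theorem cyclicInterval_injOn {r : ℕ} (hr : 0 < r) (hrn : r < n) :
    Set.InjOn (fun a => cyclicInterval n a r) (Set.Iio n) := by
  intro a ha a' ha' h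
  simp only [Set.mem_Iio] at ha ha'
  have key (x : ℕ) (hx : x < n) :
      (a ≤ x ∧ x < a + r ∨ x + n < a + r) ↔ (a' ≤ x ∧ x < a' + r ∨ x + n < a' + r) := by
    simp only at h
    exact (mem_cyclicInterval (v := ⟨x, hx⟩) ha hrn.le).symm.trans
      (h ▸ mem_cyclicInterval ha' hrn.le)
  -- the point just before the start of one interval would have to lie in the other
  have := key a ha; have := key a' ha'
  rcases lt_trichotomy a a' with hlt | heq | hgt
  · have := key (a' - 1) (by omega); omega
  · exact heq
  · have := key (a - 1) (by omega); omega

end CyclicConstruction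

theorem Nat.div_lt_of_lt_mul_div {n r d j : ℕ} (hd : 0 < d) (hr : 0 < r) (hj : j < n * d / r) :
    j * r / d < n := by
  rw [Nat.div_lt_iff_lt_mul hd]
  calc j * r < n * d / r * r := Nat.mul_lt_mul_of_pos_right hj hr
    _ ≤ n * d := Nat.div_mul_le_self _ _

section CyclicHypergraph

variable {n r d : ℕ} [NeZero n]

variable (n r d) in
def cyclicHypergraph : Finset (Finset (Fin n)) :=
  (range (n * d / r)).image fun j => cyclicInterval n (j * r / d) r

theorem card_of_mem_cyclicHypergraph (hrn : r ≤ n) {e : Finset (Fin n)}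
    (he : e ∈ cyclicHypergraph n r d) : #e = r := by
  obtain ⟨j, -, rfl⟩ := mem_image.mp he
  exact card_cyclicInterval hrn

theorem card_cyclicHypergraph (hd : 0 < d) (hdr : d ≤ r) (hrn : r < n) :
    #(cyclicHypergraph n r d) = n * d / r := by
  rw [cyclicHypergraph, card_image_of_injOn, card_range]
  have hstart : Set.InjOn (fun j => j * r / d) (range (n * d / r)) := by
    refine StrictMonoOn.injOn fun j _ j' _ hjj' => ?_
    calc j * r / d < (j * r + d) / d := by rw [Nat.add_div_right _ hd]; omega
      _ ≤ j' * r / d := Nat.div_le_div_right (by nlinarith)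
  exact (cyclicInterval_injOn (by omega) hrn).comp hstart
    fun j hj => Nat.div_lt_of_lt_mul_div hd (by omega) (mem_range.mp hj)

theorem card_filter_mem_cyclicHypergraph_le (hd : 0 < d) (hdr : d ≤ r) (hrn : r < n)
    (v : Fin n) : #{e ∈ cyclicHypergraph n r d | v ∈ e} ≤ d := by
  have hbn {j} (hj : j < n * d / r) : j * r / d < n := Nat.div_lt_of_lt_mul_div hd (by omega) hj
  have hstep (z z' : ℕ) (h : z + d ≤ z') : z * r / d + r ≤ z' * r / d := by
    rw [← Nat.add_mul_div_right _ _ hd]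
    exact Nat.div_le_div_right (by nlinarith)
  have hwrap (z : ℕ) : (z + n * d / r) * r / d ≤ z * r / d + n := by
    rw [← Nat.add_mul_div_right _ _ hd]
    exact Nat.div_le_div_right (by nlinarith [Nat.div_mul_le_self (n * d) r])
  calc #{e ∈ cyclicHypergraph n r d | v ∈ e}
      ≤ #{j ∈ range (n * d / r) | v ∈ cyclicInterval n (j * r / d) r} := by
        rw [cyclicHypergraph, filter_image]
        exact card_image_le
    _ = #{j ∈ range (n * d / r) | j * r / d ≤ v ∧ v < j * r / d + r ∨ v + n < j * r / d + r} :=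
        congrArg card (filter_congr fun j hj => mem_cyclicInterval (hbn (mem_range.mp hj)) hrn.le)
    _ ≤ d := card_filter_range_le_of_add_le hrn.le hstep hwrap (fun j hj => hbn hj) v

end CyclicHypergraph

theorem exists_le_card_filter_mem_of_div_lt {V : Type*} [Fintype V] [DecidableEq V]
    {H : Finset (Finset V)} {r d : ℕ} (hr : 0 < r) (hH : ∀ e ∈ H, #e = r)
    (hlt : Fintype.card V * d / r < #H) : ∃ v, d + 1 ≤ #{e ∈ H | v ∈ e} := by
  by_contra! hdeg
  have := sum_card_le (B := H) (n := d) fun v => Nat.le_of_lt_succ (hdeg v)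
  rw [sum_const_nat hH] at this
  exact hlt.not_ge ((Nat.le_div_iff_mul_le hr).mpr this)

theorem exBerge_eq_of_le_of_exists {α : Type*} {r n m : ℕ} {F : SimpleGraph α}
    (hle : ∀ H : Finset (Finset (Fin n)), (∀ e ∈ H, #e = r) → ¬IsBergeCopy F H → #H ≤ m)
    (hex : ∃ H : Finset (Finset (Fin n)), (∀ e ∈ H, #e = r) ∧ ¬IsBergeCopy F H ∧ #H = m) :
    exBerge r n F = m :=
  IsGreatest.csSup_eq ⟨hex, fun _ ⟨H, hH, hF, hcard⟩ => hcard ▸ hle H hH hF⟩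

theorem card_le_of_not_isBergeCopy_s9 {n ℓ k r : ℕ} (hl : 2 ≤ ℓ) (hk : 2 ≤ k) (hkr : k < r)
    (hlr : ℓ ≤ r + 1) (hn : r * ((ℓ + k) ^ r * r.factorial + 1) ≤ n)
    {H : Finset (Finset (Fin n))} (hH : ∀ e ∈ H, #e = r)
    (hF : ¬IsBergeCopy ((starsG 1 ℓ) ⊕g (matchingG (k - 1))) H) : #H ≤ n * (ℓ - 1) / r := by
  by_contra! hlt
  obtain ⟨v, hv⟩ := exists_le_card_filter_mem_of_div_lt (by omega) hH (by rwa [Fintype.card_fin])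
  have hbig : (ℓ + (k - 1) + 1) ^ r * r.factorial < #H := calc
    _ = (ℓ + k) ^ r * r.factorial := by rw [show ℓ + (k - 1) + 1 = ℓ + k by omega]
    _ < n / r := (Nat.le_div_iff_mul_le (by omega)).mpr (by nlinarith)
    _ ≤ n * (ℓ - 1) / r := Nat.div_le_div_right (Nat.le_mul_of_pos_right n (by omega))
    _ < #H := hlt
  exact hF (isBergeCopy_of_card_lt hH hlr (by omega) hbig (v := v) (by omega))

theorem ex_berge_star_union_matching_small (ℓ k r : ℕ) (hl : 2 ≤ ℓ)
    (hk : 2 ≤ k) (hkr : k < r) (hlr : ℓ ≤ r + 1) :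
    ∃ N, ∀ n ≥ N,
      exBerge r n ((starsG 1 ℓ).sum (matchingG (k - 1))) = n * (ℓ - 1) / r := by
  refine ⟨r * ((ℓ + k) ^ r * r.factorial + 1), fun n hn => ?_⟩
  have hrn : r < n := by nlinarith [(by positivity : 0 < (ℓ + k) ^ r * r.factorial)]
  have : NeZero n := ⟨by omega⟩
  refine exBerge_eq_of_le_of_exists
    (fun H hH hF => card_le_of_not_isBergeCopy_s9 hl hk hkr hlr hn hH hF)
    ⟨cyclicHypergraph n r (ℓ - 1), fun e he => card_of_mem_cyclicHypergraph hrn.le he,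
      fun hF => ?_, card_cyclicHypergraph (by omega) (by omega) hrn⟩
  obtain ⟨v, hv⟩ := (hF.of_embedding SimpleGraph.Embedding.sumInl).exists_le_card_filter_mem
  have := card_filter_mem_cyclicHypergraph_le (d := ℓ - 1) (by omega) (by omega) hrn v
  omega
end

section
/- Fix integers k ≥ 1 and r ≥ 2k - 1. For sufficiently large n, the maximum number of hyperedges in an n-vertex r-uniform hypergraph containing no Berge matching of size k equals k - 1. -/
open Finset

/-! Among `k` distinct `r`-sets with `r ≥ 2k - 1`, Hall's condition for picking two
representatives from each set, all `2k` distinct, holds: one set already has `r ≥ 2` elements,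
and two distinct sets together have at least `r + 1 ≥ 2k`. Hence an `r`-uniform hypergraph
contains a Berge matching of size `k` exactly when it has at least `k` edges, and once `n > r`
there are at least `k - 1` distinct `r`-subsets of an `n`-set. -/

open Function

theorem matchingG_edgeSet (t : ℕ) :
    (matchingG t).edgeSet = Set.range fun i : Fin t => s((i, 0), (i, 1)) := by
  ext z
  induction z using Sym2.ind with | _ a b => ?_
  obtain ⟨i, x⟩ := a
  obtain ⟨j, y⟩ := b
  simp only [SimpleGraph.mem_edgeSet, matchingG, SimpleGraph.fromRel_adj, Set.mem_range,
    Sym2.eq_iff, Prod.ext_iff]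
  grind

theorem matchingG_edge_injective (t : ℕ) :
    Injective fun i : Fin t => s((i, (0 : Fin 2)), (i, 1)) := by
  intro i j h
  simpa [Sym2.eq_iff] using h

theorem isBergeCopy_matchingG_iff {V : Type*} (t : ℕ) (H : Finset (Finset V)) :
    IsBergeCopy (matchingG t) H ↔ ∃ (f : Fin t × Fin 2 → V) (E : Fin t → Finset V),
      Injective f ∧ Injective E ∧ ∀ i, E i ∈ H ∧ ∀ j, f (i, j) ∈ E i := by
  have hg := matchingG_edge_injective t
  rw [IsBergeCopy, matchingG_edgeSet]
  constructor
  · rintro ⟨f, φ, hf, hφ, hmem⟩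
    refine ⟨f, fun i => φ s((i, 0), (i, 1)), hf, fun i j h => hg (hφ ⟨i, rfl⟩ ⟨j, rfl⟩ h),
      fun i => ⟨(hmem _ ⟨i, rfl⟩).1, fun j => (hmem _ ⟨i, rfl⟩).2 _ ?_⟩⟩
    fin_cases j <;> simp
  · rintro ⟨f, E, hf, hE, hmem⟩
    refine ⟨f, extend (fun i : Fin t => s((i, 0), (i, 1))) E fun _ => ∅, hf, ?_, ?_⟩
    · rintro _ ⟨i, rfl⟩ _ ⟨j, rfl⟩ h
      simp only [hg.extend_apply] at h
      rw [hE h]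
    · rintro _ ⟨i, rfl⟩
      rw [hg.extend_apply]
      refine ⟨(hmem i).1, fun x hx => ?_⟩
      rcases Sym2.mem_iff.mp hx with rfl | rfl <;> exact (hmem i).2 _

theorem Finset.card_lt_card_union_of_ne {α : Type*} [DecidableEq α] {s t : Finset α}
    (hst : s ≠ t) (hcard : s.card ≤ t.card) : s.card < (s ∪ t).card := by
  by_contra! h
  have hs : s ∪ t = s := (eq_of_subset_of_card_le subset_union_left h).symm
  exact hst (eq_of_subset_of_card_le (union_eq_left.mp hs) hcard).symm

theorem exists_injective_mem_of_card_eq {V : Type*} {k r : ℕ} (E : Fin k → Finset V)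
    (hE : Injective E) (hcard : ∀ i, (E i).card = r) (hr2 : 2 ≤ r) (hr : 2 * k ≤ r + 1) :
    ∃ f : Fin k × Fin 2 → V, Injective f ∧ ∀ x, f x ∈ E x.1 := by
  classical
  refine (all_card_le_biUnion_card_iff_exists_injective fun x : Fin k × Fin 2 => E x.1).mp
    fun s => ?_
  set I := s.image Prod.fst
  have hs : s.card ≤ 2 * I.card := by
    have hsub : s ⊆ I ×ˢ univ := fun x hx => mem_product.2 ⟨mem_image_of_mem _ hx, mem_univ _⟩
    simpa [mul_comm] using card_le_card hsub
  rw [← image_biUnion]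
  obtain hI | ⟨i, hi⟩ := I.eq_empty_or_nonempty
  · simp_all
  rcases le_or_gt I.card 1 with hI1 | hI1
  · calc s.card ≤ 2 := by omega
      _ ≤ (E i).card := by rw [hcard]; exact hr2
      _ ≤ (I.biUnion E).card := card_le_card (subset_biUnion_of_mem E hi)
  · obtain ⟨i, hi, j, hj, hij⟩ := one_lt_card.mp hI1
    calc s.card ≤ 2 * k := by simpa [mul_comm] using card_le_univ s
      _ ≤ r + 1 := hr
      _ ≤ (E i ∪ E j).card :=
        hcard i ▸ card_lt_card_union_of_ne (hE.ne hij) (by rw [hcard, hcard])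
      _ ≤ (I.biUnion E).card := card_le_card (union_subset (subset_biUnion_of_mem E hi)
          (subset_biUnion_of_mem E hj))

theorem exists_uniform_card_eq {V : Type*} [Fintype V] {r m : ℕ}
    (h : m ≤ (Fintype.card V).choose r) :
    ∃ H : Finset (Finset V), (∀ e ∈ H, e.card = r) ∧ H.card = m := by
  obtain ⟨H, hH, hcard⟩ := exists_subset_card_eq (s := powersetCard r univ) (by simpa using h)
  exact ⟨H, fun e he => (mem_powersetCard.mp (hH he)).2, hcard⟩

theorem isBergeCopy_matchingG_iff_le_card {V : Type*} {k r : ℕ} {H : Finset (Finset V)}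
    (hunif : ∀ e ∈ H, e.card = r) (hr2 : 2 ≤ r) (hr : 2 * k ≤ r + 1) :
    IsBergeCopy (matchingG k) H ↔ k ≤ H.card := by
  rw [isBergeCopy_matchingG_iff]
  constructor
  · rintro ⟨_, E, _, hE, hmem⟩
    simpa using card_le_card_of_injOn (s := univ) E (fun i _ => (hmem i).1) hE.injOn
  · intro hk
    let E : Fin k → Finset V := fun i => H.equivFin.symm (Fin.castLE hk i)
    have hE : Injective E :=
      Subtype.val_injective.comp (H.equivFin.symm.injective.comp (Fin.castLE_injective hk))
    have hEH : ∀ i, E i ∈ H := fun i => Subtype.prop _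
    obtain ⟨f, hf, hfE⟩ :=
      exists_injective_mem_of_card_eq E hE (fun i => hunif _ (hEH i)) hr2 hr
    exact ⟨f, E, hf, hE, fun i => ⟨hEH i, fun j => hfE (i, j)⟩⟩

theorem ex_berge_matching_very_large_r (k r : ℕ) (hk : 1 ≤ k)
    (hr2 : 2 ≤ r) (hr : 2 * k - 1 ≤ r) :
    ∃ N, ∀ n ≥ N, exBerge r n (matchingG k) = k - 1 := by
  have hr' : 2 * k ≤ r + 1 := by omega
  refine ⟨r + 1, fun n hn => IsGreatest.csSup_eq ⟨?_, ?_⟩⟩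
  · have hchoose : k - 1 ≤ n.choose r :=
      calc k - 1 ≤ r + 1 := by omega
        _ = (r + 1).choose r := (Nat.choose_succ_self_right r).symm
        _ ≤ n.choose r := Nat.choose_le_choose r hn
    obtain ⟨H, hunif, hcard⟩ :=
      exists_uniform_card_eq (V := Fin n) (r := r) (m := k - 1) (by simpa using hchoose)
    refine ⟨H, hunif, ?_, hcard⟩
    rw [isBergeCopy_matchingG_iff_le_card hunif hr2 hr']
    omega
  · rintro m ⟨H, hunif, hfree, rfl⟩
    rw [isBergeCopy_matchingG_iff_le_card hunif hr2 hr'] at hfree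
    omega
end
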